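/- arXiv:math/0504143 — 6 statements merged into one kernel-verified Lean document; each statement's English description precedes it below -/
import Mathlib

section
/- Let G be a strongly linear group and let A and B be subgroups of G such that G is the internal direct product of A and B (i.e., A and B are normal in G, A ∩ B = {1}, and every element of G is a product of an element of A and an element of B). Then A ⊆ Z(G) or B ⊆ Z(G). -/
/-- The Zariski closure of a set of `N × N` matrices over `K`: the set of matrices at which
every polynomial in the `N²` matrix entries vanishing identically on `S` also vanishes. -/
def zariskiClosure (N : ℕ) (K : Type) [Field K]
    (S : Set (Matrix (Fin N) (Fin N) K)) : Set (Matrix (Fin N) (Fin N) K) :=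
  {A | ∀ p : MvPolynomial (Fin N × Fin N) K,
    (∀ B ∈ S, MvPolynomial.eval (fun q => B q.1 q.2) p = 0) →
      MvPolynomial.eval (fun q => A q.1 q.2) p = 0}

/-- The Zariski closure of `S` contains `SL_N(K)`. -/
def ContainsSL (N : ℕ) (K : Type) [Field K] (S : Set (Matrix (Fin N) (Fin N) K)) : Prop :=
  ∀ A : Matrix.SpecialLinearGroup (Fin N) K,
    (A : Matrix (Fin N) (Fin N) K) ∈ zariskiClosure N K S

/-- A torsion-free group `G` is strongly linear if there exist `N ≥ 1`, a field `K`, and an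
injective group homomorphism `ι : G → GL_N(K)` such that the Zariski closure of `ι(G)`
contains `SL_N(K)`. -/
def StronglyLinear (G : Type*) [Group G] : Prop :=
  (∀ g : G, g ≠ 1 → ¬IsOfFinOrder g) ∧
  ∃ (N : ℕ) (K : Type) (_ : Field K)
    (ι : G →* Matrix.GeneralLinearGroup (Fin N) K),
    1 ≤ N ∧ Function.Injective ι ∧
    ContainsSL N K ((fun g : G => ((ι g : Matrix.GeneralLinearGroup (Fin N) K) :
      Matrix (Fin N) (Fin N) K)) '' Set.univ)

open Matrix

namespace SLaux

variable {n : ℕ} {K : Type} [Field K]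

lemma sbm_mul (i j k l : Fin n) (M : Matrix (Fin n) (Fin n) K) :
    (Matrix.single i j (1:K) * M) k l = if k = i then M j l else 0 := by
  by_cases h : k = i
  · subst h; simp
  · simp [h]

lemma mul_sbm (i j k l : Fin n) (M : Matrix (Fin n) (Fin n) K) :
    (M * Matrix.single i j (1:K)) k l = if l = j then M k i else 0 := by
  by_cases h : l = j
  · subst h; simp
  · simp [h]

lemma tinv (i j : Fin n) (hij : i ≠ j) (t : K) :
    (transvection i j t)⁻¹ = transvection i j (-t) :=
  inv_eq_right_inv (by
    rw [transvection_mul_transvection_same _ _ hij, add_neg_cancel, transvection_zero])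

lemma conj_formula (i j : Fin n) (hij : i ≠ j) (t : K) (M : Matrix (Fin n) (Fin n) K) :
    transvection i j t * M * (transvection i j t)⁻¹
      = M + t • (Matrix.single i j (1:K) * M - M * Matrix.single i j (1:K))
        - (t*t) • (Matrix.single i j (1:K) * M * Matrix.single i j (1:K)) := by
  rw [tinv i j hij t]
  have hE : ∀ s : K, transvection i j s = 1 + s • Matrix.single i j (1:K) := by
    intro s
    rw [smul_single, smul_eq_mul, mul_one]
    rfl
  rw [hE t, hE (-t)]
  simp only [mul_add, add_mul, one_mul, mul_one, smul_mul_assoc, mul_smul_comm,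
    smul_smul, smul_sub]
  module

end SLaux

namespace SLaux
variable {n : ℕ} {K : Type} [Field K]

lemma conj_apply (i j : Fin n) (hij : i ≠ j) (t : K) (M : Matrix (Fin n) (Fin n) K)
    (k l : Fin n) :
    (transvection i j t * M * (transvection i j t)⁻¹) k l
      = M k l + t * ((if k = i then M j l else 0) - (if l = j then M k i else 0))
        - t * t * (if k = i ∧ l = j then M j i else 0) := by
  rw [conj_formula i j hij t M]
  simp only [Matrix.sub_apply, Matrix.add_apply, Matrix.smul_apply, smul_eq_mul]
  rw [sbm_mul, mul_sbm]
  have : (Matrix.single i j (1:K) * M * Matrix.single i j (1:K)) k l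
      = if k = i ∧ l = j then M j i else 0 := by
    rw [mul_sbm, sbm_mul]
    by_cases h1 : k = i <;> by_cases h2 : l = j <;> simp [h1, h2]
  rw [this]

lemma quadK [Infinite K] (a b c : K) (h : ∀ t : K, a + t * b + t * t * c = 0) :
    a = 0 ∧ b = 0 ∧ c = 0 := by
  classical
  have h0 := h 0
  simp only [zero_mul, mul_zero, add_zero, zero_add] at h0
  have h1 := h 1
  obtain ⟨u, hu⟩ := Infinite.exists_notMem_finset ({0, 1} : Finset K)
  simp only [Finset.mem_insert, Finset.mem_singleton, not_or] at hu
  have h2 := h u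
  simp only [h0, zero_add, one_mul] at h1
  rw [h0, zero_add] at h2
  have hb : b = -c := eq_neg_of_add_eq_zero_left h1
  rw [hb] at h2
  have h3 : (u * (u - 1)) * c = 0 := by linear_combination h2
  have h4 : u * (u - 1) ≠ 0 :=
    mul_ne_zero hu.1 (sub_ne_zero.mpr hu.2)
  have hc : c = 0 := (mul_eq_zero.mp h3).resolve_left h4
  exact ⟨h0, by rw [hb, hc, neg_zero], hc⟩

lemma quadM (a b c : Matrix (Fin n) (Fin n) K) [Infinite K]
    (h : ∀ t : K, a + t • b + (t * t) • c = 0) : a = 0 ∧ b = 0 ∧ c = 0 := by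
  have h' : ∀ k l : Fin n, a k l = 0 ∧ b k l = 0 ∧ c k l = 0 := by
    intro k l
    apply quadK
    intro t
    have := congrFun (congrFun (h t) k) l
    simpa [Matrix.add_apply, Matrix.smul_apply, smul_eq_mul, mul_assoc] using this
  refine ⟨?_, ?_, ?_⟩ <;> ext k l <;> simp [(h' k l).1, (h' k l).2.1, (h' k l).2.2]

end SLaux

namespace SLaux
variable {n : ℕ} {K : Type} [Field K]

lemma key [Infinite K] (hn : 2 ≤ n) (M Nt : Matrix (Fin n) (Fin n) K)
    (hc : ∀ X : Matrix (Fin n) (Fin n) K, X.det = 1 →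
      Nt * (X * M * X⁻¹) = (X * M * X⁻¹) * Nt)
    (hM : ¬ ∃ c : K, M = c • (1 : Matrix (Fin n) (Fin n) K)) :
    ∃ c : K, Nt = c • (1 : Matrix (Fin n) (Fin n) K) := by
  classical
  have hcard : 1 < Fintype.card (Fin n) := by rw [Fintype.card_fin]; omega
  set Orb : Set (Matrix (Fin n) (Fin n) K) :=
    {M' | ∃ X : Matrix (Fin n) (Fin n) K, X.det = 1 ∧ M' = X * M * X⁻¹} with hOrbdef
  have hMOrb : M ∈ Orb := ⟨1, by simp, by simp⟩
  have hOrbconj : ∀ M' ∈ Orb, ∀ (i j : Fin n), i ≠ j → ∀ t : K,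
      transvection i j t * M' * (transvection i j t)⁻¹ ∈ Orb := by
    rintro M' ⟨X, hX, rfl⟩ i j hij t
    refine ⟨transvection i j t * X,
      by rw [det_mul, det_transvection_of_ne _ _ hij, hX, one_mul], ?_⟩
    rw [Matrix.mul_inv_rev]
    simp [mul_assoc]
  have hcomm : ∀ M' ∈ Orb, Nt * M' = M' * Nt := by
    rintro M' ⟨X, hX, rfl⟩; exact hc X hX
  -- commutation with E * M' * E
  have hfacts : ∀ M' ∈ Orb, ∀ i j : Fin n, i ≠ j →
      Nt * (Matrix.single i j (1:K) * M' * Matrix.single i j 1)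
        = (Matrix.single i j (1:K) * M' * Matrix.single i j 1) * Nt := by
    intro M' hM' i j hij
    set E := Matrix.single i j (1:K) with hE
    set D := E * M' - M' * E with hD
    set Q := E * M' * E with hQ
    have h' : ∀ t : K,
        (Nt * M' - M' * Nt) + t • (Nt * D - D * Nt) + (t*t) • (Q * Nt - Nt * Q) = 0 := by
      intro t
      have h0 := hcomm _ (hOrbconj M' hM' i j hij t)
      rw [conj_formula i j hij t M'] at h0
      have h1 : Nt * (M' + t • D - (t*t) • Q) - (M' + t • D - (t*t) • Q) * Nt = 0 :=
        sub_eq_zero.mpr h0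
      rw [← h1]
      simp only [mul_add, add_mul, mul_sub, sub_mul, mul_smul_comm, smul_mul_assoc, smul_sub]
      abel
    have := (quadM _ _ _ h').2.2
    have h2 : Q * Nt - Nt * Q = 0 := this
    have := sub_eq_zero.mp h2
    exact this.symm
  have hcommE : ∀ M' ∈ Orb, ∀ i j : Fin n, i ≠ j → M' j i ≠ 0 →
      Nt * Matrix.single i j (1:K) = Matrix.single i j 1 * Nt := by
    intro M' hM' i j hij hne
    have h := hfacts M' hM' i j hij
    have hQ : Matrix.single i j (1:K) * M' * Matrix.single i j 1
        = (M' j i) • Matrix.single i j 1 := by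
      ext k l
      rw [mul_sbm, sbm_mul]
      have h1' : ¬ k = i → i ≠ k := fun h h' => h h'.symm
      have h2' : ¬ l = j → j ≠ l := fun h h' => h h'.symm
      by_cases h1 : k = i <;> by_cases h2 : l = j <;>
        simp [h1, h2, h1' , h2', Matrix.smul_apply, Matrix.single, Matrix.of_apply]
    rw [hQ, mul_smul_comm, smul_mul_assoc] at h
    have := congrArg (fun Z => (M' j i)⁻¹ • Z) h
    simpa [smul_smul, inv_mul_cancel₀ hne] using this
  -- position predicate
  set P : Fin n → Fin n → Prop := fun p q => ∃ M' ∈ Orb, M' p q ≠ 0 with hPdef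
  have col : ∀ p q, P p q → p ≠ q → ∀ j, j ≠ p → j ≠ q → P p j := by
    rintro p q ⟨M', hM', hpq⟩ hpq' j hjp hjq
    by_cases h0 : M' p j = 0
    · refine ⟨transvection q j 1 * M' * (transvection q j 1)⁻¹,
        hOrbconj M' hM' q j (fun h => hjq h.symm) 1, ?_⟩
      rw [conj_apply q j (fun h => hjq h.symm) 1 M' p j]
      simp [h0, hpq', neg_ne_zero, hpq]
    · exact ⟨M', hM', h0⟩
  have row : ∀ p q, P p q → p ≠ q → ∀ i, i ≠ q → i ≠ p → P i q := by
    rintro p q ⟨M', hM', hpq⟩ hpq' i hiq hip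
    by_cases h0 : M' i q = 0
    · refine ⟨transvection i p 1 * M' * (transvection i p 1)⁻¹,
        hOrbconj M' hM' i p hip 1, ?_⟩
      rw [conj_apply i p hip 1 M' i q]
      have hqp : ¬ (q = p) := fun h => hpq' h.symm
      simp [h0, hqp, hpq]
    · exact ⟨M', hM', h0⟩
  have tpose : ∀ p q, P p q → p ≠ q → P q p := by
    rintro p q ⟨M', hM', hpq⟩ hpq'
    by_contra hnot
    have hallz : ∀ M'' ∈ Orb, M'' q p = 0 := by
      intro M'' hM''
      by_contra hz
      exact hnot ⟨M'', hM'', hz⟩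
    have hqp : q ≠ p := fun h => hpq' h.symm
    have hquad : ∀ t : K,
        M' q p + t * (M' p p - M' q q) + t * t * (-(M' p q)) = 0 := by
      intro t
      have h0 := hallz _ (hOrbconj M' hM' q p hqp t)
      rw [conj_apply q p hqp t M' q p] at h0
      simp only [eq_self_iff_true, and_self, if_true] at h0
      linear_combination h0
    have := (quadK _ _ _ hquad).2.2
    exact hpq (by simpa [neg_eq_zero] using this)
  have start : ∃ p q, p ≠ q ∧ P p q := by
    by_cases hoff : ∃ p q, p ≠ q ∧ M p q ≠ 0
    · obtain ⟨p, q, h1, h2⟩ := hoff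
      exact ⟨p, q, h1, M, hMOrb, h2⟩
    · push_neg at hoff
      have i0 : Fin n := ⟨0, lt_of_lt_of_le two_pos hn⟩
      have hdiag : ∃ i j, M i i ≠ M j j := by
        by_contra hsame
        push_neg at hsame
        refine hM ⟨M i0 i0, ?_⟩
        ext k l
        by_cases hkl : k = l
        · subst hkl; simp [Matrix.one_apply, hsame k i0]
        · simp [Matrix.one_apply, hkl, hoff k l hkl]
      obtain ⟨i, j, hij'⟩ := hdiag
      have hij : i ≠ j := by rintro rfl; exact hij' rfl
      refine ⟨i, j, hij, transvection i j 1 * M * (transvection i j 1)⁻¹,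
        hOrbconj M hMOrb i j hij 1, ?_⟩
      rw [conj_apply i j hij 1 M i j]
      have h1 : M i j = 0 := hoff i j hij
      have h2 : M j i = 0 := hoff j i (fun h => hij h.symm)
      simp [h1, h2, sub_ne_zero.mpr (Ne.symm hij')]
  have all : ∀ i j : Fin n, i ≠ j → P i j := by
    obtain ⟨p, q, hpq, hPpq⟩ := start
    intro i j hij
    by_cases hip : i = p
    · subst hip
      by_cases hjq : j = q
      · subst hjq; exact hPpq
      · exact col i q hPpq hpq j (Ne.symm hij) hjq
    · by_cases hiq : i = q
      · subst hiq
        have hQP := tpose p i hPpq hpq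
        by_cases hjp : j = p
        · subst hjp; exact hQP
        · exact col i p hQP (Ne.symm hpq) j (Ne.symm hij) hjp
      · have hIQ := row p q hPpq hpq i hiq hip
        by_cases hjq : j = q
        · subst hjq; exact hIQ
        · exact col i q hIQ hiq j (Ne.symm hij) hjq
  have hEall : ∀ i j : Fin n, i ≠ j →
      Nt * Matrix.single i j (1:K) = Matrix.single i j 1 * Nt := by
    intro i j hij
    obtain ⟨M', hM', hne⟩ := all j i (Ne.symm hij)
    exact hcommE M' hM' i j hij hne
  -- conclude Nt scalar
  have hoffz : ∀ k l : Fin n, k ≠ l → Nt k l = 0 := by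
    intro k l hkl
    obtain ⟨j0, hj0⟩ := Fintype.exists_ne_of_one_lt_card hcard l
    have h := hEall l j0 (fun h => hj0 h.symm)
    have h2 := congrFun (congrFun h k) j0
    rw [mul_sbm, sbm_mul] at h2
    simpa [hkl] using h2
  have hdiag : ∀ k l : Fin n, Nt k k = Nt l l := by
    intro k l
    by_cases hkl : k = l
    · rw [hkl]
    · have h := hEall k l hkl
      have h2 := congrFun (congrFun h k) l
      rw [mul_sbm, sbm_mul] at h2
      simpa using h2
  have i0 : Fin n := ⟨0, lt_of_lt_of_le two_pos hn⟩
  refine ⟨Nt i0 i0, ?_⟩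
  ext k l
  by_cases hkl : k = l
  · subst hkl; simp [Matrix.one_apply, hdiag k i0]
  · simp [Matrix.one_apply, hkl, hoffz k l hkl]

end SLaux

open Matrix MvPolynomial

namespace SLaux

lemma poly_step {N : ℕ} {K : Type} [Field K]
    (S : Set (Matrix (Fin N) (Fin N) K)) (hSL : ContainsSL N K S)
    (Ma Mb : Matrix (Fin N) (Fin N) K)
    (hS : ∀ Y ∈ S, Y * Mb * Y.adjugate * Ma * Y = Y.det • (Ma * Y * Mb)) :
    ∀ X : Matrix (Fin N) (Fin N) K, X.det = 1 →
      Ma * (X * Mb * X⁻¹) = (X * Mb * X⁻¹) * Ma := by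
  classical
  intro X hX
  set 𝕏 : Matrix (Fin N) (Fin N) (MvPolynomial (Fin N × Fin N) K) := Matrix.of fun i j => (MvPolynomial.X (i, j) : MvPolynomial (Fin N × Fin N) K)
    with h𝕏
  set P1 : Matrix (Fin N) (Fin N) (MvPolynomial (Fin N × Fin N) K) :=
    𝕏 * Mb.map MvPolynomial.C * 𝕏.adjugate * Ma.map MvPolynomial.C * 𝕏 with hP1
  set P2 : Matrix (Fin N) (Fin N) (MvPolynomial (Fin N × Fin N) K) :=
    Ma.map MvPolynomial.C * 𝕏 * Mb.map MvPolynomial.C with hP2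
  -- evaluation of the matrix polynomial at a point
  have heval : ∀ (Y : Matrix (Fin N) (Fin N) K) (k l : Fin N),
      MvPolynomial.eval (fun q : Fin N × Fin N => Y q.1 q.2)
          (P1 k l - 𝕏.det * P2 k l)
        = (Y * Mb * Y.adjugate * Ma * Y) k l - Y.det * (Ma * Y * Mb) k l := by
    intro Y k l
    set e : MvPolynomial (Fin N × Fin N) K →+* K := MvPolynomial.eval (fun q : Fin N × Fin N => Y q.1 q.2) with he
    have h1 : e.mapMatrix 𝕏 = Y := by
      ext i j
      simp [h𝕏, RingHom.mapMatrix_apply, Matrix.map_apply, he, MvPolynomial.eval_X]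
    have h2 : e.mapMatrix (Mb.map MvPolynomial.C) = Mb := by
      ext i j
      simp [RingHom.mapMatrix_apply, Matrix.map_apply, he, MvPolynomial.eval_C]
    have h3 : e.mapMatrix (Ma.map MvPolynomial.C) = Ma := by
      ext i j
      simp [RingHom.mapMatrix_apply, Matrix.map_apply, he, MvPolynomial.eval_C]
    have hP1e : e.mapMatrix P1 = Y * Mb * Y.adjugate * Ma * Y := by
      rw [hP1, _root_.map_mul, _root_.map_mul, _root_.map_mul, _root_.map_mul, RingHom.map_adjugate, h1, h2, h3]
    have hP2e : e.mapMatrix P2 = Ma * Y * Mb := by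
      rw [hP2, _root_.map_mul, _root_.map_mul, h1, h2, h3]
    have hdet : e 𝕏.det = Y.det := by rw [RingHom.map_det, h1]
    have hent : ∀ (Am : Matrix (Fin N) (Fin N) (MvPolynomial (Fin N × Fin N) K)), e (Am k l) = (e.mapMatrix Am) k l :=
      fun _ => rfl
    rw [map_sub, _root_.map_mul, hdet, hent, hent, hP1e, hP2e]
  -- the polynomials vanish on S
  have hvanish : ∀ k l : Fin N, ∀ Bm ∈ S,
      MvPolynomial.eval (fun q : Fin N × Fin N => Bm q.1 q.2)
        (P1 k l - 𝕏.det * P2 k l) = 0 := by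
    intro k l Bm hBm
    rw [heval Bm k l]
    have := hS Bm hBm
    have h := congrFun (congrFun this k) l
    rw [h]
    simp [Matrix.smul_apply, smul_eq_mul]
  -- hence vanish at X
  have hXzero : ∀ k l : Fin N,
      (X * Mb * X.adjugate * Ma * X) k l - X.det * (Ma * X * Mb) k l = 0 := by
    intro k l
    have := hSL ⟨X, hX⟩ (P1 k l - 𝕏.det * P2 k l) (hvanish k l)
    rw [heval X k l] at this
    exact this
  have hXeq : X * Mb * X.adjugate * Ma * X = Ma * X * Mb := by
    ext k l
    have := hXzero k l
    rw [hX, one_mul] at this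
    exact sub_eq_zero.mp this
  -- adjugate = inverse
  have hadj : X⁻¹ = X.adjugate := by
    apply inv_eq_right_inv
    rw [mul_adjugate, hX, one_smul]
  have hdetu : IsUnit X.det := by rw [hX]; exact isUnit_one
  have hXX : X * X⁻¹ = 1 := mul_nonsing_inv X hdetu
  calc Ma * (X * Mb * X⁻¹) = (Ma * X * Mb) * X⁻¹ := by
        simp only [Matrix.mul_assoc]
      _ = (X * Mb * X.adjugate * Ma * X) * X⁻¹ := by rw [hXeq]
      _ = (X * Mb * X⁻¹) * Ma * (X * X⁻¹) := by rw [hadj]; simp only [Matrix.mul_assoc]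
      _ = (X * Mb * X⁻¹) * Ma := by rw [hXX, mul_one]

end SLaux


theorem stronglyLinear_direct_product
    (G : Type) [Group G] (hG : StronglyLinear G)
    (A B : Subgroup G) (hA : A.Normal) (hB : B.Normal)
    (hAB : A ⊓ B = ⊥) (hprod : ∀ g : G, ∃ a ∈ A, ∃ b ∈ B, g = a * b) :
    A ≤ Subgroup.center G ∨ B ≤ Subgroup.center G := by
  classical
  -- elements of A and B commute
  have hcomm : ∀ a ∈ A, ∀ b ∈ B, a * b = b * a := by
    intro a ha b hb
    have h1 : a * b * a⁻¹ * b⁻¹ ∈ A := by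
      have h' : b * a⁻¹ * b⁻¹ ∈ A := hA.conj_mem a⁻¹ (A.inv_mem ha) b
      have := A.mul_mem ha h'
      simpa [mul_assoc] using this
    have h2 : a * b * a⁻¹ * b⁻¹ ∈ B := by
      have h' : a * b * a⁻¹ ∈ B := hB.conj_mem b hb a
      exact B.mul_mem h' (B.inv_mem hb)
    have h3 : a * b * a⁻¹ * b⁻¹ ∈ A ⊓ B := ⟨h1, h2⟩
    rw [hAB, Subgroup.mem_bot] at h3
    have h4 : a * b * a⁻¹ = b := by
      have := mul_eq_one_iff_eq_inv.mp h3
      simpa using this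
    calc a * b = (a * b * a⁻¹) * a := by group
      _ = b * a := by rw [h4]
  -- a noncentral element of A fails to commute with an element of A
  have pairA : ¬ A ≤ Subgroup.center G → ∃ a ∈ A, ∃ a' ∈ A, a * a' ≠ a' * a := by
    intro h
    obtain ⟨a, ha, hanc⟩ := SetLike.not_le_iff_exists.mp h
    rw [Subgroup.mem_center_iff] at hanc
    push_neg at hanc
    obtain ⟨g, hg⟩ := hanc
    obtain ⟨a', ha', b', hb', rfl⟩ := hprod g
    refine ⟨a, ha, a', ha', fun heq => hg ?_⟩
    have hba : b' * a = a * b' := (hcomm a ha b' hb').symm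
    calc a' * b' * a = a' * (a * b') := by rw [mul_assoc, hba]
      _ = a * (a' * b') := by rw [← mul_assoc, ← heq, mul_assoc]
  have pairB : ¬ B ≤ Subgroup.center G → ∃ b ∈ B, ∃ b' ∈ B, b * b' ≠ b' * b := by
    intro h
    obtain ⟨b, hb, hbnc⟩ := SetLike.not_le_iff_exists.mp h
    rw [Subgroup.mem_center_iff] at hbnc
    push_neg at hbnc
    obtain ⟨g, hg⟩ := hbnc
    obtain ⟨a', ha', b', hb', rfl⟩ := hprod g
    refine ⟨b', hb', b, hb, fun heq => hg ?_⟩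
    have hab : b * a' = a' * b := (hcomm a' ha' b hb).symm
    calc a' * b' * b = a' * (b' * b) := by rw [mul_assoc]
      _ = a' * (b * b') := by rw [← heq]
      _ = b * (a' * b') := by rw [← mul_assoc, ← hab, mul_assoc]
  by_contra hcon
  push_neg at hcon
  obtain ⟨a, haA, a₁, ha₁A, haa₁⟩ := pairA hcon.1
  obtain ⟨b, hbB, b₁, hb₁B, hbb₁⟩ := pairB hcon.2
  obtain ⟨hTF, N, K, fK, ι, hN1, hinj, hSL⟩ := hG
  set m : G → Matrix (Fin N) (Fin N) K :=
    fun g => ((ι g : Matrix.GeneralLinearGroup (Fin N) K) : Matrix (Fin N) (Fin N) K) with hm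
  have mmul : ∀ g h : G, m (g * h) = m g * m h := by
    intro g h
    have h1 : ι (g * h) = ι g * ι h := map_mul ι g h
    rw [hm]
    simp only [h1, Units.val_mul]
  have minj : ∀ g h : G, m g = m h → g = h := by
    intro g h hgh
    exact hinj (Units.ext hgh)
  rcases finite_or_infinite K with hfin | hinf
  · -- K finite : G is finite, hence trivial by torsion-freeness
    have hfinM : Finite (Matrix (Fin N) (Fin N) K) := by infer_instance
    have hfinG : Finite G := Finite.of_injective m (fun g h => minj g h)
    have htriv : ∀ g : G, g = 1 := by
      intro g
      by_contra hg
      exact hTF g hg (isOfFinOrder_of_finite g)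
    exact haa₁ (by rw [htriv a, htriv a₁])
  · -- K infinite
    have hcm : ∀ a' ∈ A, ∀ b' ∈ B, m a' * m b' = m b' * m a' := by
      intro a' ha' b' hb'
      rw [← mmul, ← mmul, hcomm a' ha' b' hb']
    -- N ≥ 2 since A is nonabelian
    have hma : m a * m a₁ ≠ m a₁ * m a := by
      intro h
      exact haa₁ (minj _ _ (by rw [mmul, mmul, h]))
    have hN2 : 2 ≤ N := by
      by_contra hlt
      push_neg at hlt
      have hNeq : N = 1 := le_antisymm (by omega) hN1
      subst hNeq
      apply hma
      ext i j
      rw [Matrix.mul_apply, Matrix.mul_apply, Fin.sum_univ_one, Fin.sum_univ_one,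
        Subsingleton.elim i 0, Subsingleton.elim j 0, mul_comm]
    -- all elements of ι(G) satisfy the key matrix identity
    have hS : ∀ a' ∈ A, ∀ b' ∈ B, ∀ Y ∈ ((fun g : G =>
        ((ι g : Matrix.GeneralLinearGroup (Fin N) K) : Matrix (Fin N) (Fin N) K)) '' Set.univ),
        Y * m b' * Y.adjugate * m a' * Y = Y.det • (m a' * Y * m b') := by
      rintro a' ha' b' hb' Y ⟨g, -, rfl⟩
      set Y := m g with hY
      have hU : IsUnit Y := ⟨ι g, rfl⟩
      have hdet : IsUnit Y.det := (Matrix.isUnit_iff_isUnit_det Y).mp hU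
      have hYinv : Y⁻¹ = m g⁻¹ := by
        rw [hm]
        simp only [map_inv]
        rw [Matrix.coe_units_inv]
      have hVY : Y⁻¹ * Y = 1 := Matrix.nonsing_inv_mul Y hdet
      have hadj : Y.adjugate = Y.det • Y⁻¹ := by
        have h1 : Y⁻¹ * (Y * Y.adjugate) = Y⁻¹ * (Y.det • 1) := by rw [Matrix.mul_adjugate]
        rw [← Matrix.mul_assoc, hVY, one_mul, mul_smul_comm, mul_one] at h1
        exact h1
      have hconjb : Y * m b' * Y⁻¹ = m (g * b' * g⁻¹) := by
        rw [hYinv, ← mmul, ← mmul]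
      have hcb : m a' * m (g * b' * g⁻¹) = m (g * b' * g⁻¹) * m a' :=
        hcm a' ha' _ (hB.conj_mem b' hb' g)
      calc Y * m b' * Y.adjugate * m a' * Y
          = Y.det • (Y * m b' * Y⁻¹ * m a' * Y) := by
            rw [hadj]
            simp only [mul_smul_comm, smul_mul_assoc]
        _ = Y.det • (m a' * (Y * m b' * Y⁻¹) * Y) := by
            rw [hconjb, ← hcb, ← hconjb]
        _ = Y.det • (m a' * Y * m b' * (Y⁻¹ * Y)) := by
            simp only [Matrix.mul_assoc]
        _ = Y.det • (m a' * Y * m b') := by rw [hVY, mul_one]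
    have hkey : ∀ a' ∈ A, ∀ b' ∈ B, ∀ X : Matrix (Fin N) (Fin N) K, X.det = 1 →
        m a' * (X * m b' * X⁻¹) = (X * m b' * X⁻¹) * m a' := by
      intro a' ha' b' hb'
      exact SLaux.poly_step _ hSL (m a') (m b') (hS a' ha' b' hb')
    -- one of `m a`, `m a₁` is nonscalar
    have hnons : ∃ a₂ ∈ A, ¬ ∃ c : K, m a₂ = c • (1 : Matrix (Fin N) (Fin N) K) := by
      by_contra hno
      push_neg at hno
      obtain ⟨c, hc⟩ := hno a haA
      obtain ⟨d, hd⟩ := hno a₁ ha₁A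
      apply hma
      rw [hc, hd]
      simp [smul_smul, mul_comm]
    obtain ⟨a₂, ha₂A, ha₂ns⟩ := hnons
    -- every element of B maps to a scalar matrix
    have hBscal : ∀ b' ∈ B, ∃ c : K, m b' = c • (1 : Matrix (Fin N) (Fin N) K) := by
      intro b' hb'
      by_contra hno
      exact ha₂ns (SLaux.key hN2 (m b') (m a₂) (hkey a₂ ha₂A b' hb') hno)
    obtain ⟨cb, hcb⟩ := hBscal b hbB
    obtain ⟨cb₁, hcb₁⟩ := hBscal b₁ hb₁B
    apply hbb₁
    apply minj
    rw [mmul, mmul, hcb, hcb₁]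
    simp [smul_smul, mul_comm]
end

section
/- Let K be an infinite field, L a field extension of K, N ≥ 1, and G a subgroup of GL_N(K). Then the Zariski closure of G inside GL_N(K) contains SL_N(K) if and only if the Zariski closure of the image of G inside GL_N(L) contains SL_N(L). -/
open Polynomial in
lemma poly_div {R : Type*} [CommRing R] (d : R) :
    ∀ (n : ℕ) (f : Polynomial R), f.natDegree ≤ n →
      ∃ h g, (C d * X - 1) * h + C g = C d ^ n * f := by
  intro n
  induction n with
  | zero =>
    intro f hf
    refine ⟨0, f.coeff 0, ?_⟩
    simp [(Polynomial.eq_C_of_natDegree_le_zero hf).symm]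
  | succ n ih =>
    intro f hf
    obtain ⟨h, g, hg⟩ := ih f.divX
      (le_trans Polynomial.natDegree_divX_eq_natDegree_tsub_one.le (by omega))
    refine ⟨C d * X * h + C g, d ^ (n + 1) * f.coeff 0 + g, ?_⟩
    have hf2 : X * f.divX + C (f.coeff 0) = f := Polynomial.X_mul_divX_add f
    calc (C d * X - 1) * (C d * X * h + C g) + C (d ^ (n + 1) * f.coeff 0 + g)
        = (C d * X) * ((C d * X - 1) * h + C g) + C (d ^ (n + 1)) * C (f.coeff 0) := by
          push_cast [map_add, map_mul, map_pow]
          ring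
      _ = C d ^ (n+1) * f := by
          rw [hg]
          conv_rhs => rw [← hf2]
          push_cast [map_pow]
          ring

lemma vanish_SL_extend (K L : Type) [Field K] [Infinite K] [Field L] [Algebra K L]
    (N : ℕ) (hN : 1 ≤ N) (p : MvPolynomial (Fin N × Fin N) K)
    (hp : ∀ B : Matrix (Fin N) (Fin N) K, B.det = 1 →
      MvPolynomial.eval (fun v => B v.1 v.2) p = 0)
    (A : Matrix (Fin N) (Fin N) L) (hA : A.det = 1) :
    MvPolynomial.eval (fun v => A v.1 v.2) (MvPolynomial.map (algebraMap K L) p) = 0 := by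
  classical
  set c0 : Fin N := ⟨0, hN⟩ with hc0
  set q : Polynomial (MvPolynomial (Fin N × Fin N) K) :=
    MvPolynomial.eval₂ (Polynomial.C.comp MvPolynomial.C)
      (fun v => if v.2 = c0 then Polynomial.X * Polynomial.C (MvPolynomial.X v)
        else Polynomial.C (MvPolynomial.X v)) p with hq
  have key : ∀ (T : Type) [CommRing T], ∀ (F : K →+* T) (x : Fin N × Fin N → T) (t : T),
      Polynomial.eval₂RingHom (MvPolynomial.eval₂Hom F x) t q
        = MvPolynomial.eval₂ F (fun v => if v.2 = c0 then t * x v else x v) p := by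
    intro T _ F x t
    rw [hq, MvPolynomial.eval₂_comp_left (Polynomial.eval₂RingHom (MvPolynomial.eval₂Hom F x) t)]
    congr 1
    · ext a
      simp
    · funext v
      by_cases hv : v.2 = c0
      · simp only [Function.comp_apply, hv, if_true]
        simp
        ring
      · simp [hv]
  set dP : MvPolynomial (Fin N × Fin N) K :=
    Matrix.det (Matrix.of fun a b : Fin N => (MvPolynomial.X (a, b) : MvPolynomial (Fin N × Fin N) K)) with hdPdef
  have hdP : ∀ (T : Type) [CommRing T], ∀ (F : MvPolynomial (Fin N × Fin N) K →+* T),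
      F dP = Matrix.det (Matrix.of fun a b : Fin N => F (MvPolynomial.X (a, b))) := by
    intro T _ F
    rw [hdPdef, RingHom.map_det]
    congr 1
  obtain ⟨h, g, hdiv⟩ := poly_div dP q.natDegree q le_rfl
  have hq0 : ∀ x : Fin N × Fin N → K, MvPolynomial.eval x dP ≠ 0 →
      Polynomial.eval₂RingHom (MvPolynomial.eval x) (MvPolynomial.eval x dP)⁻¹ q = 0 := by
    intro x h0
    have hk := key K (RingHom.id K) x (MvPolynomial.eval x dP)⁻¹
    set y : Fin N × Fin N → K :=
      fun v => if v.2 = c0 then (MvPolynomial.eval x dP)⁻¹ * x v else x v with hy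
    have hyB : (Matrix.of fun a b : Fin N => y (a, b)).det = 1 := by
      have hB : (Matrix.of fun a b : Fin N => y (a, b)) =
          (Matrix.of fun a b : Fin N => x (a, b)).updateCol c0
            ((MvPolynomial.eval x dP)⁻¹ • fun a => x (a, c0)) := by
        ext a b
        by_cases hb : b = c0 <;> simp [Matrix.updateCol_apply, hb, hy]
      rw [hB, Matrix.det_updateCol_smul]
      have hself : (Matrix.of fun a b : Fin N => x (a, b)).updateCol c0 (fun a => x (a, c0))
          = Matrix.of fun a b : Fin N => x (a, b) := Matrix.updateCol_eq_self _ _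
      rw [hself]
      have hd : MvPolynomial.eval x dP = (Matrix.of fun a b : Fin N => x (a, b)).det := by
        simpa using hdP K (MvPolynomial.eval x)
      rw [← hd, inv_mul_cancel₀ h0]
    have hev := hp (Matrix.of fun a b : Fin N => y (a, b)) hyB
    calc Polynomial.eval₂RingHom (MvPolynomial.eval x) (MvPolynomial.eval x dP)⁻¹ q
        = MvPolynomial.eval₂ (RingHom.id K) y p := hk
      _ = MvPolynomial.eval y p := MvPolynomial.eval₂_id p
      _ = 0 := hev
  have hg : g = 0 := by
    have hdPne : dP ≠ 0 := by
      intro hz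
      have h1 : MvPolynomial.eval (fun v : Fin N × Fin N => if v.1 = v.2 then (1:K) else 0) dP = 1 := by
        rw [hdP K (MvPolynomial.eval _)]
        have h2 : (Matrix.of fun a b : Fin N =>
            MvPolynomial.eval (fun v : Fin N × Fin N => if v.1 = v.2 then (1:K) else 0)
              (MvPolynomial.X (a, b))) = (1 : Matrix (Fin N) (Fin N) K) := by
          ext a b
          simp [Matrix.one_apply]
        rw [h2, Matrix.det_one]
      rw [hz] at h1
      simp at h1
    have hgd : g * dP = 0 := by
      apply MvPolynomial.funext
      intro x
      rw [map_zero, map_mul]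
      rcases eq_or_ne (MvPolynomial.eval x dP) 0 with h0 | h0
      · rw [h0, mul_zero]
      · have hq0' := hq0 x h0
        simp only [Polynomial.coe_eval₂RingHom] at hq0'
        have e := congrArg (Polynomial.eval₂RingHom (MvPolynomial.eval x)
          (MvPolynomial.eval x dP)⁻¹) hdiv
        simp only [map_add, map_mul, map_sub, map_one, map_pow, Polynomial.coe_eval₂RingHom,
          Polynomial.eval₂_C, Polynomial.eval₂_X, hq0', mul_zero] at e
        rw [mul_inv_cancel₀ h0, sub_self, zero_mul, zero_add] at e
        rw [e, zero_mul]
    rcases mul_eq_zero.mp hgd with hh | hh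
    · exact hh
    · exact absurd hh hdPne
  rw [hg, map_zero, add_zero] at hdiv
  have heAdP : MvPolynomial.eval₂Hom (algebraMap K L) (fun v : Fin N × Fin N => A v.1 v.2) dP = 1 := by
    rw [hdP L (MvPolynomial.eval₂Hom (algebraMap K L) (fun v : Fin N × Fin N => A v.1 v.2))]
    have h2 : (Matrix.of fun a b : Fin N =>
        MvPolynomial.eval₂Hom (algebraMap K L) (fun v : Fin N × Fin N => A v.1 v.2)
          (MvPolynomial.X (a, b))) = A := by
      ext a b
      simp
    rw [h2, hA]
  have hk := key L (algebraMap K L) (fun v : Fin N × Fin N => A v.1 v.2) 1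
  have e := congrArg (Polynomial.eval₂RingHom
    (MvPolynomial.eval₂Hom (algebraMap K L) (fun v : Fin N × Fin N => A v.1 v.2)) 1) hdiv
  simp only [map_mul, map_sub, map_one, map_pow, Polynomial.coe_eval₂RingHom,
    Polynomial.eval₂_C, Polynomial.eval₂_X, heAdP, one_mul, mul_one, sub_self, zero_mul,
    one_pow] at e
  simp only [Polynomial.coe_eval₂RingHom] at hk
  rw [hk] at e
  simp only [one_mul, ite_self] at e
  rw [MvPolynomial.eval₂_eq_eval_map] at e
  exact e.symm


lemma exists_decomp (K L : Type) [Field K] [Field L] [Algebra K L] {σ : Type}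
    (q : MvPolynomial σ L) :
    ∃ (n : ℕ) (c : Fin n → L) (qi : Fin n → MvPolynomial σ K),
      LinearIndependent K c ∧
      q = ∑ i, MvPolynomial.C (c i) * MvPolynomial.map (algebraMap K L) (qi i) := by
  classical
  set b := Module.Basis.ofVectorSpace K L with hb
  set T : Finset (Module.Basis.ofVectorSpaceIndex K L) :=
    q.support.biUnion (fun m => (b.repr (MvPolynomial.coeff m q)).support) with hT
  set qj : (Module.Basis.ofVectorSpaceIndex K L) → MvPolynomial σ K :=
    fun j => ∑ m ∈ q.support,
      MvPolynomial.monomial m (b.repr (MvPolynomial.coeff m q) j) with hqj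
  have hcoeff : ∀ (j) (m), MvPolynomial.coeff m (qj j) = b.repr (MvPolynomial.coeff m q) j := by
    intro j m
    rw [hqj]
    simp only [MvPolynomial.coeff_sum, MvPolynomial.coeff_monomial]
    rw [Finset.sum_ite_eq' q.support m (fun m' => b.repr (MvPolynomial.coeff m' q) j)]
    by_cases hm : m ∈ q.support
    · simp [hm]
    · simp [hm, MvPolynomial.notMem_support_iff.mp hm]
  have hmain : q = ∑ j ∈ T, MvPolynomial.C (b j) * MvPolynomial.map (algebraMap K L) (qj j) := by
    apply MvPolynomial.ext
    intro m
    rw [MvPolynomial.coeff_sum]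
    simp only [MvPolynomial.coeff_C_mul, MvPolynomial.coeff_map, hcoeff]
    by_cases hm : m ∈ q.support
    · have hsub : (b.repr (MvPolynomial.coeff m q)).support ⊆ T := by
        intro j hj
        exact Finset.mem_biUnion.mpr ⟨m, hm, hj⟩
      have := Module.Basis.linearCombination_repr b (MvPolynomial.coeff m q)
      rw [Finsupp.linearCombination_apply, Finsupp.sum] at this
      calc MvPolynomial.coeff m q
          = ∑ j ∈ (b.repr (MvPolynomial.coeff m q)).support,
              b.repr (MvPolynomial.coeff m q) j • b j := this.symm
        _ = ∑ j ∈ T, b.repr (MvPolynomial.coeff m q) j • b j := by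
            apply Finset.sum_subset hsub
            intro j _ hj
            rw [Finsupp.notMem_support_iff.mp hj, zero_smul]
        _ = ∑ j ∈ T, b j * (algebraMap K L) (b.repr (MvPolynomial.coeff m q) j) := by
            apply Finset.sum_congr rfl
            intro j _
            rw [Algebra.smul_def, mul_comm]
    · rw [MvPolynomial.notMem_support_iff.mp hm]
      symm
      apply Finset.sum_eq_zero
      intro j _
      simp
  refine ⟨T.card, fun i => b (T.equivFin.symm i), fun i => qj (T.equivFin.symm i), ?_, ?_⟩
  · exact (b.linearIndependent.comp _
      (Subtype.val_injective.comp T.equivFin.symm.injective))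
  · rw [hmain, ← Finset.sum_attach T
      (fun j => MvPolynomial.C (b j) * MvPolynomial.map (algebraMap K L) (qj j))]
    exact (Equiv.sum_comp T.equivFin.symm
      (fun j => MvPolynomial.C (b j) * MvPolynomial.map (algebraMap K L) (qj j))).symm


lemma ev_map (K L : Type) [Field K] [Field L] [Algebra K L] {σ : Type}
    (r : MvPolynomial σ K) (x : σ → K) (y : σ → L) (hxy : ∀ v, y v = algebraMap K L (x v)) :
    MvPolynomial.eval y (MvPolynomial.map (algebraMap K L) r)
      = algebraMap K L (MvPolynomial.eval x r) := by
  have hy : y = fun v => algebraMap K L (x v) := funext hxy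
  subst hy
  rw [← MvPolynomial.eval₂_eq_eval_map]
  have h := MvPolynomial.eval₂_comp_left (algebraMap K L) (RingHom.id K) x r
  simp only [MvPolynomial.eval₂_id, RingHom.comp_id, Function.comp] at h
  exact h.symm



/-- The set of matrices underlying a subgroup `B` of a subgroup `G` of `GL_N(K)`. -/
def matImage {N : ℕ} {K : Type} [Field K] (G : Subgroup (Matrix.GeneralLinearGroup (Fin N) K))
    (B : Subgroup ↥G) : Set (Matrix (Fin N) (Fin N) K) :=
  (fun b : ↥G => ((b : Matrix.GeneralLinearGroup (Fin N) K) : Matrix (Fin N) (Fin N) K)) ''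
    (B : Set ↥G)

theorem zariski_density_field_extension
    (K L : Type) [Field K] [Infinite K] [Field L] [Algebra K L]
    (N : ℕ) (hN : 1 ≤ N)
    (G : Subgroup (Matrix.GeneralLinearGroup (Fin N) K)) :
    ContainsSL N K (matImage G (⊤ : Subgroup ↥G)) ↔
    ContainsSL N L
      ((fun u : ↥G => (algebraMap K L).mapMatrix
        ((u : Matrix.GeneralLinearGroup (Fin N) K) : Matrix (Fin N) (Fin N) K)) ''
        Set.univ) := by
  classical
  constructor
  · intro hK A'
    intro qq hq
    obtain ⟨n, c, qi, hind, hdecomp⟩ := exists_decomp K L qq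
    have hvan : ∀ (i : Fin n) (u : ↥G),
        MvPolynomial.eval
          (fun v => ((u : Matrix.GeneralLinearGroup (Fin N) K) : Matrix (Fin N) (Fin N) K) v.1 v.2)
          (qi i) = 0 := by
      intro i u
      set Bmat : Matrix (Fin N) (Fin N) K :=
        ((u : Matrix.GeneralLinearGroup (Fin N) K) : Matrix (Fin N) (Fin N) K) with hBmat
      have hmem : (algebraMap K L).mapMatrix Bmat ∈
          ((fun u : ↥G => (algebraMap K L).mapMatrix
            ((u : Matrix.GeneralLinearGroup (Fin N) K) : Matrix (Fin N) (Fin N) K)) ''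
            Set.univ) := ⟨u, Set.mem_univ u, rfl⟩
      have h0 := hq _ hmem
      rw [hdecomp, map_sum] at h0
      have h1 : ∀ j : Fin n,
          MvPolynomial.eval (fun v : Fin N × Fin N => ((algebraMap K L).mapMatrix Bmat) v.1 v.2)
            (MvPolynomial.C (c j) * MvPolynomial.map (algebraMap K L) (qi j))
          = (MvPolynomial.eval (fun v : Fin N × Fin N => Bmat v.1 v.2) (qi j)) • c j := by
        intro j
        rw [map_mul, MvPolynomial.eval_C,
          ev_map K L (qi j) (fun v : Fin N × Fin N => Bmat v.1 v.2)
            (fun v : Fin N × Fin N => ((algebraMap K L).mapMatrix Bmat) v.1 v.2)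
            (by intro v; simp [RingHom.mapMatrix_apply]),
          Algebra.smul_def]
        ring
      rw [Finset.sum_congr rfl (fun j _ => h1 j)] at h0
      exact Fintype.linearIndependent_iff.mp hind
        (fun j => MvPolynomial.eval (fun v : Fin N × Fin N => Bmat v.1 v.2) (qi j)) h0 i
    have hSLK : ∀ (i : Fin n) (B : Matrix (Fin N) (Fin N) K), B.det = 1 →
        MvPolynomial.eval (fun v => B v.1 v.2) (qi i) = 0 := by
      intro i B hB
      refine hK ⟨B, hB⟩ (qi i) ?_
      rintro B' ⟨u, -, rfl⟩
      exact hvan i u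
    have hA' : ∀ i, MvPolynomial.eval (fun v => (A' : Matrix (Fin N) (Fin N) L) v.1 v.2)
        (MvPolynomial.map (algebraMap K L) (qi i)) = 0 :=
      fun i => vanish_SL_extend K L N hN (qi i) (hSLK i) _ A'.2
    rw [hdecomp, map_sum]
    apply Finset.sum_eq_zero
    intro j _
    rw [map_mul, hA' j, mul_zero]
  · intro hL A
    intro pp hvanK
    have hdet : ((algebraMap K L).mapMatrix (A : Matrix (Fin N) (Fin N) K)).det = 1 := by
      rw [← RingHom.map_det, A.2, map_one]
    have h0 := hL ⟨(algebraMap K L).mapMatrix (A : Matrix (Fin N) (Fin N) K), hdet⟩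
      (MvPolynomial.map (algebraMap K L) pp) ?_
    · have hev := ev_map K L pp (fun v : Fin N × Fin N => (A : Matrix (Fin N) (Fin N) K) v.1 v.2)
        (fun v : Fin N × Fin N =>
          ((algebraMap K L).mapMatrix (A : Matrix (Fin N) (Fin N) K)) v.1 v.2)
        (by intro v; simp [RingHom.mapMatrix_apply])
      rw [hev] at h0
      exact (map_eq_zero_iff _ (algebraMap K L).injective).mp h0
    · rintro B' ⟨u, -, rfl⟩
      have hev := ev_map K L pp
        (fun v : Fin N × Fin N =>
          ((u : Matrix.GeneralLinearGroup (Fin N) K) : Matrix (Fin N) (Fin N) K) v.1 v.2)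
        (fun v : Fin N × Fin N => ((algebraMap K L).mapMatrix
          ((u : Matrix.GeneralLinearGroup (Fin N) K) : Matrix (Fin N) (Fin N) K)) v.1 v.2)
        (by intro v; simp [RingHom.mapMatrix_apply])
      rw [hev, hvanK _ ⟨u, Subgroup.mem_top u, rfl⟩, map_zero]
end

section
/- Let K be a field of characteristic 0, N ≥ 1, G a group, and R : G → GL_N(K) an injective group homomorphism such that the Zariski closure of R(G) contains GL_N(K). If Γ is a finite-index subgroup of G which is the internal direct product of subgroups Γ₁ and Γ₂ (i.e., Γ₁ and Γ₂ are normal in Γ, Γ₁ ∩ Γ₂ = {1}, and every element of Γ is a product of an element of Γ₁ and an element of Γ₂), then Γ₁ is commutative or Γ₂ is commutative. -/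
open Matrix MvPolynomial

namespace ZD

variable {K : Type} [Field K] {N : ℕ}

local notation "Mat" => Matrix (Fin N) (Fin N) K

def IsScalar (M : Mat) : Prop := M ∈ Set.range (Matrix.scalar (Fin N))

def powSubgroup (m : ℕ) : Subgroup (Mat)ˣ :=
  Subgroup.closure {W : (Mat)ˣ | ∃ u : (Mat)ˣ, W = u ^ m}

def cmt {H : Type*} [Group H] (U C : H) : H := U * C * U⁻¹ * C⁻¹

lemma stdE_sq {i j : Fin N} (hij : i ≠ j) :
    (Matrix.single i j (1:K)) * Matrix.single i j 1 = 0 :=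
  Matrix.single_mul_single_of_ne 1 i j i (Ne.symm hij) 1

lemma smul_stdE_sq {i j : Fin N} (hij : i ≠ j) (s t : K) :
    (s • Matrix.single i j (1:K)) * (t • Matrix.single i j 1) = 0 := by
  rw [smul_mul_assoc, mul_smul_comm, stdE_sq hij]; simp

lemma one_add_smul_stdE_pow {i j : Fin N} (hij : i ≠ j) (s : K) (k : ℕ) :
    ((1 : Mat) + s • Matrix.single i j 1) ^ k
      = 1 + ((k : K) * s) • Matrix.single i j 1 := by
  induction k with
  | zero => simp
  | succ k ih =>
      rw [pow_succ, ih, mul_add, mul_one, add_mul, one_mul, smul_stdE_sq hij, add_zero,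
        add_assoc, ← add_smul]
      congr 2
      push_cast; ring

def tvu (i j : Fin N) (hij : i ≠ j) (s : K) : (Mat)ˣ where
  val := 1 + s • Matrix.single i j 1
  inv := 1 - s • Matrix.single i j 1
  val_inv := by
    rw [mul_sub, mul_one, add_mul, one_mul, smul_stdE_sq hij, add_zero]
    abel
  inv_val := by
    rw [sub_mul, one_mul, mul_add, mul_one, smul_stdE_sq hij, add_zero]
    abel

lemma tvu_val (i j : Fin N) (hij : i ≠ j) (s : K) :
    ((tvu i j hij s : (Mat)ˣ) : Mat) = 1 + s • Matrix.single i j 1 := rfl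

lemma tvu_inv_val (i j : Fin N) (hij : i ≠ j) (s : K) :
    (((tvu i j hij s)⁻¹ : (Mat)ˣ) : Mat) = 1 - s • Matrix.single i j 1 := rfl

lemma tvu_pow (i j : Fin N) (hij : i ≠ j) (s : K) (k : ℕ) (hk : (k : K) ≠ 0) :
    tvu i j hij s = (tvu i j hij (s / k)) ^ k := by
  apply Units.ext
  rw [Units.val_pow_eq_pow_val, tvu_val, tvu_val, one_add_smul_stdE_pow hij,
    mul_div_cancel₀ _ hk]

lemma tvu_mem (i j : Fin N) (hij : i ≠ j) (s : K) (m : ℕ) (hm : (m : K) ≠ 0) :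
    tvu i j hij s ∈ powSubgroup m := by
  rw [tvu_pow i j hij s m hm]
  exact Subgroup.subset_closure ⟨_, rfl⟩

end ZD

namespace ZD

variable {K : Type} [Field K] {N : ℕ}

local notation "Mat" => Matrix (Fin N) (Fin N) K

lemma scalar_eq_smul_one (k : K) : (Matrix.scalar (Fin N)) k = k • (1 : Mat) := by
  rw [Matrix.scalar_apply, Matrix.smul_one_eq_diagonal]

lemma cmt_val (U C : (Mat)ˣ) :
    ((cmt U C : (Mat)ˣ) : Mat)
      = (U : Mat) * (C : Mat) * ((U⁻¹ : (Mat)ˣ) : Mat) * ((C⁻¹ : (Mat)ˣ) : Mat) := by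
  rw [cmt, Units.val_mul, Units.val_mul, Units.val_mul]

lemma det_unit_ne_zero (U : (Mat)ˣ) : ((U : Mat)).det ≠ 0 := by
  have : IsUnit ((U : Mat)).det := (Matrix.isUnit_iff_isUnit_det _).mp U.isUnit
  exact this.ne_zero

lemma scalar_of_cmt_scalar (m : ℕ) (hm : (m:K) ≠ 0) (hNK : (N:K) ≠ 0) (A₀ : (Mat)ˣ)
    (h : ∀ U ∈ powSubgroup m, IsScalar ((cmt U A₀ : (Mat)ˣ) : Mat)) :
    IsScalar ((A₀ : (Mat)ˣ) : Mat) := by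
  apply Matrix.mem_range_scalar_of_commute_single
  intro i j hij
  obtain ⟨k, hk⟩ := h (tvu i j hij ((1:K) / N)) (tvu_mem i j hij _ m hm)
  rw [cmt_val] at hk
  have h1 : (tvu i j hij ((1:K) / N) : Mat) * (A₀ : Mat)
      * (((tvu i j hij ((1:K) / N))⁻¹ : (Mat)ˣ) : Mat) = k • (A₀ : Mat) := by
    have h := congrArg (fun M : Mat => M * (A₀ : Mat)) hk
    simp only [mul_assoc] at h ⊢
    rw [Units.inv_mul, mul_one] at h
    rw [← h, scalar_eq_smul_one, smul_mul_assoc, one_mul]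
  have hdet : k ^ N = 1 := by
    have hd := congrArg Matrix.det h1
    rw [Matrix.det_mul, Matrix.det_mul, Matrix.det_smul, Fintype.card_fin] at hd
    have hww : ((tvu i j hij ((1:K) / N) : Mat)).det
        * ((((tvu i j hij ((1:K) / N))⁻¹ : (Mat)ˣ) : Mat)).det = 1 := by
      rw [← Matrix.det_mul, Units.mul_inv, Matrix.det_one]
    have hA := det_unit_ne_zero A₀
    have hd' : k ^ N * ((A₀ : Mat)).det = 1 * ((A₀ : Mat)).det := by
      linear_combination (-1 : K) * hd + ((A₀ : Mat)).det * hww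
    exact mul_right_cancel₀ hA hd'
  have h2 : ∀ t : ℕ, ((tvu i j hij ((1:K) / N) ^ t : (Mat)ˣ) : Mat) * (A₀ : Mat)
      * (((tvu i j hij ((1:K) / N) ^ t)⁻¹ : (Mat)ˣ) : Mat) = k ^ t • (A₀ : Mat) := by
    intro t
    induction t with
    | zero => simp
    | succ t ih =>
        rw [pow_succ, _root_.mul_inv_rev, Units.val_mul, Units.val_mul]
        calc ((tvu i j hij ((1:K) / N) ^ t : (Mat)ˣ) : Mat) * (tvu i j hij ((1:K) / N) : Mat)
              * (A₀ : Mat)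
              * ((((tvu i j hij ((1:K) / N))⁻¹ : (Mat)ˣ) : Mat)
                * (((tvu i j hij ((1:K) / N) ^ t)⁻¹ : (Mat)ˣ) : Mat))
            = ((tvu i j hij ((1:K) / N) ^ t : (Mat)ˣ) : Mat)
              * ((tvu i j hij ((1:K) / N) : Mat) * (A₀ : Mat)
                * (((tvu i j hij ((1:K) / N))⁻¹ : (Mat)ˣ) : Mat))
              * (((tvu i j hij ((1:K) / N) ^ t)⁻¹ : (Mat)ˣ) : Mat) := by
              simp only [mul_assoc]
          _ = k • (((tvu i j hij ((1:K) / N) ^ t : (Mat)ˣ) : Mat) * (A₀ : Mat)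
                * (((tvu i j hij ((1:K) / N) ^ t)⁻¹ : (Mat)ˣ) : Mat)) := by
              rw [h1, mul_smul_comm, smul_mul_assoc]
          _ = k ^ (t+1) • (A₀ : Mat) := by rw [ih, smul_smul, ← pow_succ']
  have h3 := h2 N
  rw [← tvu_pow i j hij 1 N hNK, hdet, one_smul] at h3
  have h4 : ((tvu i j hij (1:K) : (Mat)ˣ) : Mat) * (A₀ : Mat)
      = (A₀ : Mat) * ((tvu i j hij (1:K) : (Mat)ˣ) : Mat) := by
    have h := congrArg (fun M : Mat => M * ((tvu i j hij (1:K) : (Mat)ˣ) : Mat)) h3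
    simp only [mul_assoc] at h
    rw [Units.inv_mul, mul_one] at h
    exact h
  rw [tvu_val] at h4
  have h5 : Matrix.single i j (1:K) * (A₀ : Mat) = (A₀ : Mat) * Matrix.single i j 1 := by
    rw [add_mul, mul_add, one_mul, mul_one, one_smul] at h4
    exact add_left_cancel h4
  exact h5

end ZD

namespace ZD

variable {K : Type} [Field K] {N : ℕ}

local notation "Mat" => Matrix (Fin N) (Fin N) K

lemma EXE_eq (i j : Fin N) (X : Mat) :
    Matrix.single i j (1:K) * X * Matrix.single i j 1 = X j i • Matrix.single i j 1 := by
  ext a b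
  by_cases hb : b = j
  · subst hb
    by_cases ha : a = i
    · subst ha; simp
    · simp only [Matrix.smul_apply]
      rw [Matrix.mul_single_apply_same,
        Matrix.single_mul_apply_of_ne (h := ha),
        Matrix.single_apply_of_row_ne (hi := fun h => ha h.symm)]
      simp
  · simp only [Matrix.smul_apply]
    rw [Matrix.mul_single_apply_of_ne (hbj := hb),
      Matrix.single_apply_of_col_ne (hj := fun h => hb h.symm)]
    simp

lemma span_gen (V : Submodule K (Matrix (Fin N) (Fin N) K))
    (hEXE : ∀ (i j : Fin N), i ≠ j → ∀ X ∈ V, Matrix.single i j 1 * X * Matrix.single i j 1 ∈ V)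
    (hAd : ∀ (i j : Fin N), i ≠ j → ∀ X ∈ V,
      Matrix.single i j 1 * X - X * Matrix.single i j 1 ∈ V)
    (X₀ : Mat) (hX₀V : X₀ ∈ V) (hX₀ : ¬ IsScalar X₀) :
    ∀ i j : Fin N, i ≠ j → Matrix.single i j (1:K) ∈ V := by
  have step0 : ∃ a b : Fin N, a ≠ b ∧ Matrix.single a b (1:K) ∈ V := by
    by_cases hoff : ∃ p q : Fin N, p ≠ q ∧ X₀ p q ≠ 0
    · obtain ⟨p, q, hpq, h0⟩ := hoff
      have h := hEXE q p hpq.symm X₀ hX₀V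
      rw [EXE_eq] at h
      refine ⟨q, p, hpq.symm, ?_⟩
      have h' := V.smul_mem (X₀ p q)⁻¹ h
      rwa [smul_smul, inv_mul_cancel₀ h0, one_smul] at h'
    · push_neg at hoff
      have hdiag : ∃ p q : Fin N, X₀ p p ≠ X₀ q q := by
        by_contra hc
        push_neg at hc
        apply hX₀
        rcases isEmpty_or_nonempty (Fin N) with hE | hNE
        · exact ⟨0, Subsingleton.elim _ _⟩
        · obtain ⟨i₀⟩ := hNE
          refine ⟨X₀ i₀ i₀, ?_⟩
          ext a b
          rw [Matrix.scalar_apply]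
          by_cases hab : a = b
          · subst hab; rw [Matrix.diagonal_apply_eq]; exact (hc i₀ a).symm ▸ rfl
          · rw [Matrix.diagonal_apply_ne _ hab]; exact (hoff a b hab).symm
      obtain ⟨p, q, hpq'⟩ := hdiag
      have hpq : p ≠ q := by rintro rfl; exact hpq' rfl
      have h := hAd p q hpq X₀ hX₀V
      have hcompute : Matrix.single p q (1:K) * X₀ - X₀ * Matrix.single p q 1
          = (X₀ q q - X₀ p p) • Matrix.single p q 1 := by
        ext a' b'
        by_cases hb : b' = q
        · subst hb
          by_cases ha : a' = p
          · subst ha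
            simp [sub_mul, mul_comm]
          · simp only [Matrix.sub_apply, Matrix.smul_apply]
            rw [Matrix.mul_single_apply_same,
              Matrix.single_mul_apply_of_ne (h := ha),
              Matrix.single_apply_of_row_ne (hi := fun h => ha h.symm),
              hoff a' p ha]
            simp
        · by_cases ha : a' = p
          · subst ha
            simp only [Matrix.sub_apply, Matrix.smul_apply]
            rw [Matrix.mul_single_apply_of_ne (hbj := hb),
              Matrix.single_mul_apply_same,
              Matrix.single_apply_of_col_ne (hj := fun h => hb h.symm),
              hoff q b' (fun h => hb h.symm)]
            simp
          · simp only [Matrix.sub_apply, Matrix.smul_apply]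
            rw [Matrix.mul_single_apply_of_ne (hbj := hb),
              Matrix.single_mul_apply_of_ne (h := ha),
              Matrix.single_apply_of_col_ne (hj := fun h => hb h.symm)]
            simp
      rw [hcompute] at h
      refine ⟨p, q, hpq, ?_⟩
      have h' := V.smul_mem (X₀ q q - X₀ p p)⁻¹ h
      rwa [smul_smul, inv_mul_cancel₀ (sub_ne_zero_of_ne (Ne.symm hpq')), one_smul] at h'
  obtain ⟨a, b, hab, hEab⟩ := step0
  have swap : ∀ x y : Fin N, x ≠ y → Matrix.single x y (1:K) ∈ V →
      Matrix.single y x (1:K) ∈ V := by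
    intro x y hxy hx
    have h := hEXE y x hxy.symm _ hx
    rw [EXE_eq] at h
    simpa using h
  have colb : ∀ k : Fin N, k ≠ b → Matrix.single k b (1:K) ∈ V := by
    intro k hkb
    by_cases hka : k = a
    · subst hka; exact hEab
    · have h := hAd k a hka _ hEab
      rw [Matrix.single_mul_single_same,
        Matrix.single_mul_single_of_ne _ _ _ _ (Ne.symm hkb), sub_zero, one_mul] at h
      exact h
  have rowb : ∀ k : Fin N, k ≠ b → Matrix.single b k (1:K) ∈ V :=
    fun k hk => swap k b hk (colb k hk)
  intro i j hij
  by_cases hjb : j = b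
  · subst hjb; exact colb i hij
  · by_cases hib : i = b
    · subst hib; exact rowb j hjb
    · have h := hAd i b hib _ (rowb j hjb)
      rw [Matrix.single_mul_single_same,
        Matrix.single_mul_single_of_ne _ _ _ _ (Ne.symm hij), sub_zero, one_mul] at h
      exact h

end ZD

namespace ZD

variable {K : Type} [Field K] {N : ℕ}

local notation "Mat" => Matrix (Fin N) (Fin N) K

lemma endgame (m : ℕ) (hm : (m:K) ≠ 0) (hNK : (N:K) ≠ 0) (h2 : (2:K) ≠ 0)
    (C A₀ : (Mat)ˣ) (hC : ¬ IsScalar ((C : (Mat)ˣ) : Mat)) (hA : ¬ IsScalar ((A₀ : (Mat)ˣ) : Mat))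
    (hcomm : ∀ U ∈ powSubgroup (K := K) (N := N) m, ∀ V ∈ powSubgroup (K := K) (N := N) m,
      Commute ((cmt U C : (Mat)ˣ) : Mat) ((cmt V A₀ : (Mat)ˣ) : Mat)) : False := by
  obtain ⟨V₀, hV₀mem, hX₀⟩ : ∃ V₀ ∈ powSubgroup (K := K) (N := N) m,
      ¬ IsScalar ((cmt V₀ A₀ : (Mat)ˣ) : Mat) := by
    by_contra hc
    push_neg at hc
    exact hA (scalar_of_cmt_scalar m hm hNK A₀ hc)
  have main : ∀ U ∈ powSubgroup (K := K) (N := N) m, IsScalar ((cmt U C : (Mat)ˣ) : Mat) := by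
    intro U hU
    have hz : ∀ W ∈ powSubgroup (K := K) (N := N) m,
        Commute ((cmt U C : (Mat)ˣ) : Mat) ((W * cmt V₀ A₀ * W⁻¹ : (Mat)ˣ) : Mat) := by
      intro W hW
      have hid : W * cmt V₀ A₀ * W⁻¹ = cmt (W * V₀) A₀ * (cmt W A₀)⁻¹ := by
        simp only [cmt]
        group
      rw [hid, Units.val_mul]
      exact (hcomm U hU (W * V₀) (Subgroup.mul_mem _ hW hV₀mem)).mul_right
        ((hcomm U hU W hW).units_inv_right)
    set S : Set (Matrix (Fin N) (Fin N) K) :=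
      {M | ∃ W ∈ powSubgroup (K := K) (N := N) m,
        M = ((W * cmt V₀ A₀ * W⁻¹ : (Mat)ˣ) : Mat)} with hS
    set V : Submodule K (Matrix (Fin N) (Fin N) K) := Submodule.span K S with hV
    have hzV : ∀ X ∈ V, Commute ((cmt U C : (Mat)ˣ) : Mat) X := by
      intro X hX
      induction hX using Submodule.span_induction with
      | mem x hx => obtain ⟨W, hW, rfl⟩ := hx; exact hz W hW
      | zero => exact Commute.zero_right _
      | add a b _ _ ha hb => exact ha.add_right hb
      | smul r a _ ha => exact ha.smul_right r
    have hconj : ∀ W ∈ powSubgroup (K := K) (N := N) m, ∀ X ∈ V,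
        ((W : (Mat)ˣ) : Mat) * X * ((W⁻¹ : (Mat)ˣ) : Mat) ∈ V := by
      intro W hW X hX
      induction hX using Submodule.span_induction with
      | mem x hx =>
          obtain ⟨W', hW', rfl⟩ := hx
          apply Submodule.subset_span
          refine ⟨W * W', Subgroup.mul_mem _ hW hW', ?_⟩
          rw [← Units.val_mul, ← Units.val_mul]
          congr 1
          rw [_root_.mul_inv_rev]
          simp only [mul_assoc]
      | zero => simpa using V.zero_mem
      | add a b _ _ ha hb =>
          have : ((W : (Mat)ˣ) : Mat) * (a + b) * ((W⁻¹ : (Mat)ˣ) : Mat)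
              = ((W : (Mat)ˣ) : Mat) * a * ((W⁻¹ : (Mat)ˣ) : Mat)
                + ((W : (Mat)ˣ) : Mat) * b * ((W⁻¹ : (Mat)ˣ) : Mat) := by
            noncomm_ring
          rw [this]; exact V.add_mem ha hb
      | smul r a _ ha =>
          have : ((W : (Mat)ˣ) : Mat) * (r • a) * ((W⁻¹ : (Mat)ˣ) : Mat)
              = r • (((W : (Mat)ˣ) : Mat) * a * ((W⁻¹ : (Mat)ˣ) : Mat)) := by
            rw [mul_smul_comm, smul_mul_assoc]
          rw [this]; exact V.smul_mem r ha
    have hEXE : ∀ (i j : Fin N), i ≠ j → ∀ X ∈ V,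
        Matrix.single i j (1:K) * X * Matrix.single i j 1 ∈ V := by
      intro i j hij X hX
      have t1 := hconj (tvu i j hij 1) (tvu_mem i j hij 1 m hm) X hX
      have t2 := hconj (tvu i j hij (-1)) (tvu_mem i j hij (-1) m hm) X hX
      rw [tvu_val, tvu_inv_val, one_smul] at t1
      rw [tvu_val, tvu_inv_val, neg_smul, one_smul, sub_neg_eq_add, ← sub_eq_add_neg] at t2
      -- t1 : (1 + E) * X * (1 - E) ∈ V ; t2 : (1 - E) * X * (1 + E) ∈ V
      have key : Matrix.single i j (1:K) * X * Matrix.single i j 1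
          = (2⁻¹ : K) • ((X + X)
            - ((1 + Matrix.single i j 1) * X * (1 - Matrix.single i j 1)
              + (1 - Matrix.single i j 1) * X * (1 + Matrix.single i j 1))) := by
        rw [eq_inv_smul_iff₀ h2, two_smul]
        noncomm_ring
      rw [key]
      exact V.smul_mem _ (V.sub_mem (V.add_mem hX hX) (V.add_mem t1 t2))
    have hAd : ∀ (i j : Fin N), i ≠ j → ∀ X ∈ V,
        Matrix.single i j (1:K) * X - X * Matrix.single i j 1 ∈ V := by
      intro i j hij X hX
      have t2 := hconj (tvu i j hij (-1)) (tvu_mem i j hij (-1) m hm) X hX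
      rw [tvu_val, tvu_inv_val, neg_smul, one_smul, sub_neg_eq_add, ← sub_eq_add_neg] at t2
      have hexe := hEXE i j hij X hX
      have key : Matrix.single i j (1:K) * X - X * Matrix.single i j 1
          = X - Matrix.single i j 1 * X * Matrix.single i j 1
            - (1 - Matrix.single i j 1) * X * (1 + Matrix.single i j 1) := by
        noncomm_ring
      rw [key]
      exact V.sub_mem (V.sub_mem hX hexe) t2
    have hX₀V : ((cmt V₀ A₀ : (Mat)ˣ) : Mat) ∈ V := by
      apply Submodule.subset_span
      exact ⟨1, Subgroup.one_mem _, by simp⟩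
    have hEij := span_gen V hEXE hAd _ hX₀V hX₀
    apply Matrix.mem_range_scalar_of_commute_single
    intro i j hij
    exact (hzV _ (hEij i j hij)).symm
  exact hC (scalar_of_cmt_scalar m hm hNK C main)

end ZD

namespace ZD

variable {K : Type} [Field K] {N : ℕ}

local notation "Mat" => Matrix (Fin N) (Fin N) K
local notation "Poly" => MvPolynomial (Fin N × Fin N) K

def coords (A : Mat) : (Fin N × Fin N) → K := fun q => A q.1 q.2

noncomputable def evalMat (A : Mat) (P : Matrix (Fin N) (Fin N) Poly) : Mat :=
  P.map (MvPolynomial.eval (coords A))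

def IsPolyMap (f : Mat → Mat) : Prop := ∃ P, ∀ A : Mat, evalMat A P = f A

lemma isPolyMap_const (M : Mat) : IsPolyMap (fun _ => M) := by
  refine ⟨M.map MvPolynomial.C, fun A => ?_⟩
  ext i j
  simp [evalMat, Matrix.map_apply]

lemma isPolyMap_id : IsPolyMap (fun A : Mat => A) := by
  refine ⟨Matrix.of fun i j => MvPolynomial.X (i, j), fun A => ?_⟩
  ext i j
  simp [evalMat, Matrix.map_apply, coords]

lemma IsPolyMap.mul {f g : Mat → Mat} (hf : IsPolyMap f) (hg : IsPolyMap g) :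
    IsPolyMap (fun A => f A * g A) := by
  obtain ⟨P, hP⟩ := hf
  obtain ⟨Q, hQ⟩ := hg
  refine ⟨P * Q, fun A => ?_⟩
  rw [evalMat, Matrix.map_mul (f := MvPolynomial.eval (coords A))]
  rw [← evalMat, ← evalMat, hP, hQ]

lemma IsPolyMap.sub {f g : Mat → Mat} (hf : IsPolyMap f) (hg : IsPolyMap g) :
    IsPolyMap (fun A => f A - g A) := by
  obtain ⟨P, hP⟩ := hf
  obtain ⟨Q, hQ⟩ := hg
  refine ⟨P - Q, fun A => ?_⟩
  simp only
  rw [← hP, ← hQ]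
  ext i j
  simp [evalMat, Matrix.map_apply, Matrix.sub_apply]

lemma isPolyMap_one : IsPolyMap (fun _ : Mat => (1 : Mat)) := isPolyMap_const 1

lemma IsPolyMap.pow {f : Mat → Mat} (hf : IsPolyMap f) (m : ℕ) :
    IsPolyMap (fun A => f A ^ m) := by
  induction m with
  | zero => simpa using isPolyMap_one
  | succ m ih =>
      have := ih.mul hf
      simpa [pow_succ] using this

lemma IsPolyMap.adjugate {f : Mat → Mat} (hf : IsPolyMap f) :
    IsPolyMap (fun A => (f A).adjugate) := by
  obtain ⟨P, hP⟩ := hf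
  refine ⟨P.adjugate, fun A => ?_⟩
  have h := RingHom.map_adjugate (MvPolynomial.eval (coords A)) P
  rw [RingHom.mapMatrix_apply, RingHom.mapMatrix_apply] at h
  rw [evalMat, h, ← evalMat, hP]

/-- a polynomial vanishing at all invertible matrices is zero -/
lemma vanish_of_units [CharZero K] (p : Poly)
    (h : ∀ u : (Mat)ˣ, MvPolynomial.eval (coords ((u : (Mat)ˣ) : Mat)) p = 0) :
    p = 0 := by
  haveI : Infinite K := Infinite.of_injective (Nat.cast : ℕ → K) Nat.cast_injective
  set dP : Poly := (Matrix.of fun i j => MvPolynomial.X ((i, j) : Fin N × Fin N)).det with hdP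
  have hd_eval : ∀ A : Mat, MvPolynomial.eval (coords A) dP = A.det := by
    intro A
    rw [hdP, RingHom.map_det]
    congr 1
    ext i j
    simp [RingHom.mapMatrix_apply, Matrix.map_apply, coords]
  have hq : p * dP = 0 := by
    apply MvPolynomial.funext
    intro x
    set A : Mat := Matrix.of fun i j => x (i, j) with hA
    have hxA : coords A = x := by
      funext q
      cases q
      rfl
    rw [_root_.map_mul, map_zero]
    by_cases hdet : A.det = 0
    · rw [← hxA, hd_eval, hdet, mul_zero]
    · obtain ⟨u, hu⟩ := (Matrix.isUnit_iff_isUnit_det A).mpr (isUnit_iff_ne_zero.mpr hdet)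
      have := h u
      rw [hu, hxA] at this
      rw [this, zero_mul]
  have hdP_ne : dP ≠ 0 := by
    intro h0
    have := hd_eval (1 : Mat)
    rw [h0, map_zero, Matrix.det_one] at this
    exact one_ne_zero this.symm
  rcases mul_eq_zero.mp hq with h0 | h0
  · exact h0
  · exact absurd h0 hdP_ne

end ZD

namespace ZD

variable {K : Type} [Field K] {N : ℕ}

local notation "Mat" => Matrix (Fin N) (Fin N) K

def Fc (C₀ : Mat) (X : Mat) : Mat := X * C₀ * X.adjugate * C₀.adjugate

def Phi (C₀ A₀ X Y : Mat) : Mat := Fc C₀ X * Fc A₀ Y - Fc A₀ Y * Fc C₀ X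

lemma adj_unit (u : (Mat)ˣ) :
    ((u : (Mat)ˣ) : Mat).adjugate = ((u : (Mat)ˣ) : Mat).det • ((u⁻¹ : (Mat)ˣ) : Mat) := by
  calc ((u : (Mat)ˣ) : Mat).adjugate
      = ((u : (Mat)ˣ) : Mat).adjugate * (((u : (Mat)ˣ) : Mat) * ((u⁻¹ : (Mat)ˣ) : Mat)) := by
        rw [Units.mul_inv, mul_one]
    _ = (((u : (Mat)ˣ) : Mat).adjugate * ((u : (Mat)ˣ) : Mat)) * ((u⁻¹ : (Mat)ˣ) : Mat) := by
        rw [mul_assoc]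
    _ = ((u : (Mat)ˣ) : Mat).det • ((u⁻¹ : (Mat)ˣ) : Mat) := by
        rw [Matrix.adjugate_mul, smul_mul_assoc, one_mul]

lemma Fc_unit (C₀ u : (Mat)ˣ) :
    Fc ((C₀ : (Mat)ˣ) : Mat) ((u : (Mat)ˣ) : Mat)
      = (((u : (Mat)ˣ) : Mat).det * ((C₀ : (Mat)ˣ) : Mat).det) • ((cmt u C₀ : (Mat)ˣ) : Mat) := by
  rw [Fc, cmt_val, adj_unit, adj_unit]
  simp only [mul_smul_comm, smul_mul_assoc, smul_smul]
  rw [mul_comm (((C₀ : (Mat)ˣ) : Mat)).det]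

lemma phi_unit_eq (C₀ A₀ u v : (Mat)ˣ) :
    Phi ((C₀ : (Mat)ˣ) : Mat) ((A₀ : (Mat)ˣ) : Mat) ((u : (Mat)ˣ) : Mat) ((v : (Mat)ˣ) : Mat)
      = ((((u : (Mat)ˣ) : Mat).det * ((C₀ : (Mat)ˣ) : Mat).det)
          * (((v : (Mat)ˣ) : Mat).det * ((A₀ : (Mat)ˣ) : Mat).det)) •
        (((cmt u C₀ : (Mat)ˣ) : Mat) * ((cmt v A₀ : (Mat)ˣ) : Mat)
          - ((cmt v A₀ : (Mat)ˣ) : Mat) * ((cmt u C₀ : (Mat)ˣ) : Mat)) := by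
  rw [Phi, Fc_unit, Fc_unit, smul_mul_smul_comm, smul_mul_smul_comm, smul_sub,
    mul_comm (((v : (Mat)ˣ) : Mat).det * ((A₀ : (Mat)ˣ) : Mat).det)]

lemma commute_iff_phi (C₀ A₀ u v : (Mat)ˣ) :
    Phi ((C₀ : (Mat)ˣ) : Mat) ((A₀ : (Mat)ˣ) : Mat) ((u : (Mat)ˣ) : Mat) ((v : (Mat)ˣ) : Mat) = 0
      ↔ Commute ((cmt u C₀ : (Mat)ˣ) : Mat) ((cmt v A₀ : (Mat)ˣ) : Mat) := by
  rw [phi_unit_eq]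
  have hne : (((u : (Mat)ˣ) : Mat).det * ((C₀ : (Mat)ˣ) : Mat).det)
      * (((v : (Mat)ˣ) : Mat).det * ((A₀ : (Mat)ˣ) : Mat).det) ≠ 0 :=
    mul_ne_zero (mul_ne_zero (det_unit_ne_zero u) (det_unit_ne_zero C₀))
      (mul_ne_zero (det_unit_ne_zero v) (det_unit_ne_zero A₀))
  rw [smul_eq_zero]
  constructor
  · rintro (h | h)
    · exact absurd h hne
    · exact (sub_eq_zero.mp h)
  · intro h
    right
    rw [Commute] at h
    rw [h, sub_self]

lemma isPolyMap_phi_left (C₀ A₀ L Rt Y : Mat) (m : ℕ) :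
    IsPolyMap (fun A : Mat => Phi C₀ A₀ (L * A ^ m * Rt) Y) := by
  have hg : IsPolyMap (fun A : Mat => L * A ^ m * Rt) :=
    ((isPolyMap_const L).mul (isPolyMap_id.pow m)).mul (isPolyMap_const Rt)
  have hFc : IsPolyMap (fun A : Mat => Fc C₀ (L * A ^ m * Rt)) :=
    ((hg.mul (isPolyMap_const C₀)).mul hg.adjugate).mul (isPolyMap_const C₀.adjugate)
  exact (hFc.mul (isPolyMap_const (Fc A₀ Y))).sub ((isPolyMap_const (Fc A₀ Y)).mul hFc)

lemma isPolyMap_phi_right (C₀ A₀ X L Rt : Mat) (m : ℕ) :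
    IsPolyMap (fun B : Mat => Phi C₀ A₀ X (L * B ^ m * Rt)) := by
  have hg : IsPolyMap (fun B : Mat => L * B ^ m * Rt) :=
    ((isPolyMap_const L).mul (isPolyMap_id.pow m)).mul (isPolyMap_const Rt)
  have hFc : IsPolyMap (fun B : Mat => Fc A₀ (L * B ^ m * Rt)) :=
    ((hg.mul (isPolyMap_const A₀)).mul hg.adjugate).mul (isPolyMap_const A₀.adjugate)
  exact ((isPolyMap_const (Fc C₀ X)).mul hFc).sub (hFc.mul (isPolyMap_const (Fc C₀ X)))

/-- lift vanishing from group image to all matrices -/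
lemma polymap_vanish [CharZero K] {G : Type} [Group G] (R : G →* (Mat)ˣ)
    (hval : ∀ u : (Mat)ˣ, ∀ p : MvPolynomial (Fin N × Fin N) K,
      (∀ g : G, MvPolynomial.eval (coords ((R g : (Mat)ˣ) : Mat)) p = 0) →
        MvPolynomial.eval (coords ((u : (Mat)ˣ) : Mat)) p = 0)
    {f : Mat → Mat} (hf : IsPolyMap f) (h0 : ∀ g : G, f ((R g : (Mat)ˣ) : Mat) = 0) :
    ∀ A : Mat, f A = 0 := by
  obtain ⟨P, hP⟩ := hf
  have hent : ∀ i j, P i j = 0 := by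
    intro i j
    apply vanish_of_units
    intro u
    apply hval u
    intro g
    have := congrArg (fun M : Mat => M i j) (hP ((R g : (Mat)ˣ) : Mat))
    simp only [evalMat, Matrix.map_apply] at this
    rw [this, h0 g]
    rfl
  intro A
  rw [← hP A]
  ext i j
  simp only [evalMat, Matrix.map_apply, hent i j, map_zero]
  rfl

end ZD

namespace ZD

variable {K : Type} [Field K] {N : ℕ}

local notation "Mat" => Matrix (Fin N) (Fin N) K

def Pm (m : ℕ) (l : List Mat) : Mat := (l.map (· ^ m)).prod

lemma Pm_nil (m : ℕ) : Pm (K := K) (N := N) m [] = 1 := rfl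

lemma Pm_cons (m : ℕ) (A : Mat) (l : List Mat) : Pm m (A :: l) = A ^ m * Pm m l := by
  simp [Pm]

lemma Pm_append_singleton (m : ℕ) (l : List Mat) (A : Mat) :
    Pm m (l ++ [A]) = Pm m l * A ^ m := by
  simp [Pm]

lemma elim_lemma [CharZero K] {G : Type} [Group G] (R : G →* (Mat)ˣ)
    (hval : ∀ u : (Mat)ˣ, ∀ p : MvPolynomial (Fin N × Fin N) K,
      (∀ g : G, MvPolynomial.eval (coords ((R g : (Mat)ˣ) : Mat)) p = 0) →
        MvPolynomial.eval (coords ((u : (Mat)ˣ) : Mat)) p = 0)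
    (C₀ A₀ : Mat) (m : ℕ)
    (hbase : ∀ lg lv : List G,
      Phi C₀ A₀ (Pm m (lg.map (fun g => ((R g : (Mat)ˣ) : Mat))))
        (Pm m (lv.map (fun g => ((R g : (Mat)ˣ) : Mat)))) = 0) :
    ∀ lm lv : List Mat, Phi C₀ A₀ (Pm m lm) (Pm m lv) = 0 := by
  have stage1 : ∀ lm : List Mat, ∀ lg lv : List G,
      Phi C₀ A₀ (Pm m lm * Pm m (lg.map (fun g => ((R g : (Mat)ˣ) : Mat))))
        (Pm m (lv.map (fun g => ((R g : (Mat)ˣ) : Mat)))) = 0 := by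
    intro lm
    induction lm using List.reverseRecOn with
    | nil =>
        intro lg lv
        rw [Pm_nil, one_mul]
        exact hbase lg lv
    | append_singleton lm A ih =>
        intro lg lv
        have hpoly := isPolyMap_phi_left C₀ A₀ (Pm m lm)
          (Pm m (lg.map (fun g => ((R g : (Mat)ˣ) : Mat))))
          (Pm m (lv.map (fun g => ((R g : (Mat)ˣ) : Mat)))) m
        have h0 : ∀ g : G,
            Phi C₀ A₀ (Pm m lm * ((R g : (Mat)ˣ) : Mat) ^ m
                * Pm m (lg.map (fun g => ((R g : (Mat)ˣ) : Mat))))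
              (Pm m (lv.map (fun g => ((R g : (Mat)ˣ) : Mat)))) = 0 := by
          intro g
          have := ih (g :: lg) lv
          rw [List.map_cons, Pm_cons, ← mul_assoc] at this
          exact this
        have := polymap_vanish R hval hpoly h0 A
        rw [Pm_append_singleton]
        exact this
  have stage2 : ∀ lm lv : List Mat, ∀ lg : List G,
      Phi C₀ A₀ (Pm m lm)
        (Pm m lv * Pm m (lg.map (fun g => ((R g : (Mat)ˣ) : Mat)))) = 0 := by
    intro lm lv
    induction lv using List.reverseRecOn with
    | nil =>
        intro lg
        rw [Pm_nil, one_mul]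
        have := stage1 lm [] lg
        rw [List.map_nil, Pm_nil, mul_one] at this
        exact this
    | append_singleton lv B ih =>
        intro lg
        have hpoly := isPolyMap_phi_right C₀ A₀ (Pm m lm) (Pm m lv)
          (Pm m (lg.map (fun g => ((R g : (Mat)ˣ) : Mat)))) m
        have h0 : ∀ g : G,
            Phi C₀ A₀ (Pm m lm)
              (Pm m lv * ((R g : (Mat)ˣ) : Mat) ^ m
                * Pm m (lg.map (fun g => ((R g : (Mat)ˣ) : Mat)))) = 0 := by
          intro g
          have := ih (g :: lg)
          rw [List.map_cons, Pm_cons, ← mul_assoc] at this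
          exact this
        have := polymap_vanish R hval hpoly h0 B
        rw [Pm_append_singleton]
        exact this
  intro lm lv
  have := stage2 lm lv []
  rw [List.map_nil, Pm_nil, mul_one] at this
  exact this

lemma mem_pow_rep (m : ℕ) {U : (Mat)ˣ} (hU : U ∈ powSubgroup (K := K) (N := N) m) :
    ∃ l : List ((Mat)ˣ), U = (l.map (· ^ m)).prod := by
  induction hU using Subgroup.closure_induction with
  | mem x hx => obtain ⟨u, rfl⟩ := hx; exact ⟨[u], by simp⟩
  | one => exact ⟨[], by simp⟩
  | mul x y _ _ hx hy =>
      obtain ⟨l₁, rfl⟩ := hx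
      obtain ⟨l₂, rfl⟩ := hy
      exact ⟨l₁ ++ l₂, by simp⟩
  | inv x _ hx =>
      obtain ⟨l, rfl⟩ := hx
      refine ⟨(l.reverse).map (·⁻¹), ?_⟩
      rw [List.prod_inv_reverse]
      simp [List.map_map, Function.comp_def, inv_pow]

end ZD

theorem finite_index_direct_product_of_zariski_dense
    (K : Type) [Field K] [CharZero K] (N : ℕ) (hN : 1 ≤ N)
    (G : Type) [Group G] (R : G →* Matrix.GeneralLinearGroup (Fin N) K)
    (hinj : Function.Injective R)
    (hdense : ∀ A : Matrix.GeneralLinearGroup (Fin N) K,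
      ((A : Matrix.GeneralLinearGroup (Fin N) K) : Matrix (Fin N) (Fin N) K) ∈
        zariskiClosure N K ((fun g : G => ((R g : Matrix.GeneralLinearGroup (Fin N) K) :
          Matrix (Fin N) (Fin N) K)) '' Set.univ))
    (Γ : Subgroup G) (hΓ : Γ.FiniteIndex)
    (Γ₁ Γ₂ : Subgroup G) (h1 : Γ₁ ≤ Γ) (h2 : Γ₂ ≤ Γ)
    (hn1 : ∀ g ∈ Γ, ∀ x ∈ Γ₁, g * x * g⁻¹ ∈ Γ₁)
    (hn2 : ∀ g ∈ Γ, ∀ x ∈ Γ₂, g * x * g⁻¹ ∈ Γ₂)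
    (hint : Γ₁ ⊓ Γ₂ = ⊥)
    (hprod : ∀ g ∈ Γ, ∃ a ∈ Γ₁, ∃ b ∈ Γ₂, g = a * b) :
    (∀ a ∈ Γ₁, ∀ b ∈ Γ₁, a * b = b * a) ∨ (∀ a ∈ Γ₂, ∀ b ∈ Γ₂, a * b = b * a) := by
  classical
  by_cases hN2 : N = 1
  · -- 1 × 1 matrices commute, so G is commutative
    subst hN2
    left
    intro a _ b _
    apply hinj
    have hcomm : ∀ X Y : Matrix (Fin 1) (Fin 1) K, X * Y = Y * X := by
      intro X Y
      ext i j
      rw [Matrix.mul_apply, Matrix.mul_apply]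
      simp [Fin.sum_univ_one, Fin.eq_zero i, Fin.eq_zero j, mul_comm]
    apply Units.ext
    rw [_root_.map_mul, _root_.map_mul, Units.val_mul, Units.val_mul]
    exact hcomm _ _
  · have hN2' : 2 ≤ N := by omega
    by_contra hcon
    push_neg at hcon
    obtain ⟨⟨a, ha, b, hb, hab⟩, ⟨c, hc, d, hd, hcd⟩⟩ := hcon
    -- Γ₁ and Γ₂ commute elementwise
    have key1 : ∀ x ∈ Γ₁, ∀ y ∈ Γ₂, x * y = y * x := by
      intro x hx y hy
      have hmem : x * y * x⁻¹ * y⁻¹ ∈ Γ₁ ⊓ Γ₂ := by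
        constructor
        · have h' : y * x⁻¹ * y⁻¹ ∈ Γ₁ := hn1 y (h2 hy) x⁻¹ (Γ₁.inv_mem hx)
          have := Γ₁.mul_mem hx h'
          show x * y * x⁻¹ * y⁻¹ ∈ Γ₁
          convert this using 1
          group
        · have h' : x * y * x⁻¹ ∈ Γ₂ := hn2 x (h1 hx) y hy
          exact Γ₂.mul_mem h' (Γ₂.inv_mem hy)
      rw [hint] at hmem
      have : x * y * x⁻¹ * y⁻¹ = 1 := hmem
      have := congrArg (fun z => z * y * x) this
      simpa [mul_assoc] using this
    -- commutators with c land in Γ₂, with a in Γ₁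
    have key2 : ∀ x ∈ Γ, x * c * x⁻¹ * c⁻¹ ∈ Γ₂ := by
      intro x hx
      obtain ⟨a', ha', b', hb', rfl⟩ := hprod x hx
      have hw : b' * c * b'⁻¹ ∈ Γ₂ := hn2 b' (h2 hb') c hc
      have hcomm := key1 a' ha' _ hw
      have heq : a' * b' * c * (a' * b')⁻¹ * c⁻¹ = (b' * c * b'⁻¹) * c⁻¹ := by
        rw [_root_.mul_inv_rev]
        have := hcomm
        -- a' * (b' * c * b'⁻¹) = (b' * c * b'⁻¹) * a'
        calc a' * b' * c * (b'⁻¹ * a'⁻¹) * c⁻¹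
            = a' * (b' * c * b'⁻¹) * a'⁻¹ * c⁻¹ := by group
          _ = (b' * c * b'⁻¹) * a' * a'⁻¹ * c⁻¹ := by rw [this]
          _ = (b' * c * b'⁻¹) * c⁻¹ := by group
      rw [heq]
      exact Γ₂.mul_mem hw (Γ₂.inv_mem hc)
    have key2' : ∀ y ∈ Γ, y * a * y⁻¹ * a⁻¹ ∈ Γ₁ := by
      intro y hy
      obtain ⟨a', ha', b', hb', rfl⟩ := hprod y hy
      have hw : a' * a * a'⁻¹ ∈ Γ₁ := hn1 a' (h1 ha') a ha
      -- b' commutes with everything in Γ₁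
      have heq : a' * b' * a * (a' * b')⁻¹ * a⁻¹ = (a' * a * a'⁻¹) * a⁻¹ := by
        rw [_root_.mul_inv_rev]
        have hcb : b' * a = a * b' := (key1 a ha b' hb').symm
        calc a' * b' * a * (b'⁻¹ * a'⁻¹) * a⁻¹
            = a' * (b' * a) * b'⁻¹ * a'⁻¹ * a⁻¹ := by group
          _ = a' * (a * b') * b'⁻¹ * a'⁻¹ * a⁻¹ := by rw [hcb]
          _ = (a' * a * a'⁻¹) * a⁻¹ := by group
      rw [heq]
      exact Γ₁.mul_mem hw (Γ₁.inv_mem ha)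
    have key3 : ∀ x ∈ Γ, ∀ y ∈ Γ,
        (x * c * x⁻¹ * c⁻¹) * (y * a * y⁻¹ * a⁻¹)
          = (y * a * y⁻¹ * a⁻¹) * (x * c * x⁻¹ * c⁻¹) :=
      fun x hx y hy => (key1 _ (key2' y hy) _ (key2 x hx)).symm
    -- finite index: m-th powers lie in Γ
    haveI : Γ.FiniteIndex := hΓ
    haveI hfin : Γ.normalCore.FiniteIndex := Subgroup.finiteIndex_normalCore Γ
    set m : ℕ := Γ.normalCore.index with hm
    have hm0 : m ≠ 0 := hfin.index_ne_zero
    have hpow : ∀ g : G, g ^ m ∈ Γ :=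
      fun g => Γ.normalCore_le (Γ.normalCore.pow_index_mem g)
    -- density in usable form
    have hval : ∀ u : (Matrix (Fin N) (Fin N) K)ˣ, ∀ p : MvPolynomial (Fin N × Fin N) K,
        (∀ g : G, MvPolynomial.eval (ZD.coords ((R g : (Matrix (Fin N) (Fin N) K)ˣ) :
          Matrix (Fin N) (Fin N) K)) p = 0) →
          MvPolynomial.eval (ZD.coords ((u : (Matrix (Fin N) (Fin N) K)ˣ) :
            Matrix (Fin N) (Fin N) K)) p = 0 := by
      intro u p hp
      refine hdense u p ?_
      rintro B ⟨g, -, rfl⟩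
      exact hp g
    -- base case of elimination
    set C₀ : Matrix (Fin N) (Fin N) K := ((R c : (Matrix (Fin N) (Fin N) K)ˣ) :
      Matrix (Fin N) (Fin N) K) with hC₀
    set A₀ : Matrix (Fin N) (Fin N) K := ((R a : (Matrix (Fin N) (Fin N) K)ˣ) :
      Matrix (Fin N) (Fin N) K) with hA₀
    have hPg : ∀ lg : List G,
        ZD.Pm m (lg.map (fun g => ((R g : (Matrix (Fin N) (Fin N) K)ˣ) :
          Matrix (Fin N) (Fin N) K)))
          = ((R ((lg.map (fun g => g ^ m)).prod) : (Matrix (Fin N) (Fin N) K)ˣ) :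
            Matrix (Fin N) (Fin N) K) := by
      intro lg
      induction lg with
      | nil => simp [ZD.Pm]
      | cons g l ih =>
          rw [List.map_cons, ZD.Pm_cons, List.map_cons, List.prod_cons, _root_.map_mul,
            Units.val_mul, _root_.map_pow, Units.val_pow_eq_pow_val, ih]
    have hmemΓ : ∀ lg : List G, (lg.map (fun g => g ^ m)).prod ∈ Γ := by
      intro lg
      apply Subgroup.list_prod_mem
      intro x hx
      rw [List.mem_map] at hx
      obtain ⟨g, -, rfl⟩ := hx
      exact hpow g
    have hRcmt : ∀ x y : G, R (x * y * x⁻¹ * y⁻¹) = ZD.cmt (R x) (R y) := by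
      intro x y
      simp [ZD.cmt, _root_.map_mul]
    have hbase : ∀ lg lv : List G,
        ZD.Phi C₀ A₀
          (ZD.Pm m (lg.map (fun g => ((R g : (Matrix (Fin N) (Fin N) K)ˣ) :
            Matrix (Fin N) (Fin N) K))))
          (ZD.Pm m (lv.map (fun g => ((R g : (Matrix (Fin N) (Fin N) K)ˣ) :
            Matrix (Fin N) (Fin N) K)))) = 0 := by
      intro lg lv
      rw [hPg, hPg]
      set x : G := (lg.map (fun g => g ^ m)).prod
      set y : G := (lv.map (fun g => g ^ m)).prod
      rw [hC₀, hA₀]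
      apply (ZD.commute_iff_phi (R c) (R a) (R x) (R y)).mpr
      have hkey := key3 x (hmemΓ lg) y (hmemΓ lv)
      have hR : ZD.cmt (R x) (R c) * ZD.cmt (R y) (R a)
          = ZD.cmt (R y) (R a) * ZD.cmt (R x) (R c) := by
        rw [← hRcmt x c, ← hRcmt y a, ← _root_.map_mul, ← _root_.map_mul, hkey]
      have hval' := congrArg Units.val hR
      rw [Units.val_mul, Units.val_mul] at hval'
      exact hval'
    have helim := ZD.elim_lemma R hval C₀ A₀ m hbase
    -- commutation on the power subgroup
    have hcommU : ∀ U ∈ ZD.powSubgroup (K := K) (N := N) m,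
        ∀ V ∈ ZD.powSubgroup (K := K) (N := N) m,
        Commute ((ZD.cmt U (R c) : (Matrix (Fin N) (Fin N) K)ˣ) : Matrix (Fin N) (Fin N) K)
          ((ZD.cmt V (R a) : (Matrix (Fin N) (Fin N) K)ˣ) : Matrix (Fin N) (Fin N) K) := by
      intro U hU V hV
      obtain ⟨lu, rfl⟩ := ZD.mem_pow_rep m hU
      obtain ⟨lv, rfl⟩ := ZD.mem_pow_rep m hV
      apply (ZD.commute_iff_phi (R c) (R a) _ _).mp
      have hlist : ∀ l : List ((Matrix (Fin N) (Fin N) K)ˣ),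
          (((l.map (· ^ m)).prod : (Matrix (Fin N) (Fin N) K)ˣ) :
            Matrix (Fin N) (Fin N) K) = ZD.Pm m (l.map Units.val) := by
        intro l
        induction l with
        | nil => simp [ZD.Pm]
        | cons u l ih =>
            rw [List.map_cons, List.prod_cons, Units.val_mul, List.map_cons, ZD.Pm_cons,
              Units.val_pow_eq_pow_val, ih]
      have hUval := hlist lu
      have hVval := hlist lv
      rw [hUval, hVval, ← hC₀, ← hA₀]
      exact helim _ _
    -- nonscalarity
    have hnsc : ∀ (u v : G), u * v ≠ v * u →
        ¬ ZD.IsScalar ((R u : (Matrix (Fin N) (Fin N) K)ˣ) : Matrix (Fin N) (Fin N) K) := by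
      intro u v huv hsc
      obtain ⟨k, hk⟩ := hsc
      apply huv
      apply hinj
      apply Units.ext
      rw [_root_.map_mul, _root_.map_mul, Units.val_mul, Units.val_mul, ← hk]
      exact (Matrix.scalar_commute k (fun r' => mul_comm k r')
        ((R v : (Matrix (Fin N) (Fin N) K)ˣ) : Matrix (Fin N) (Fin N) K))
    have hCns := hnsc c d hcd
    have hAns := hnsc a b hab
    -- contradiction
    exact ZD.endgame m (Nat.cast_ne_zero.mpr hm0)
      (Nat.cast_ne_zero.mpr (by omega))
      (by norm_num)
      (R c) (R a) hCns hAns hcommU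
end

section
/- Assume that any two non-commuting elements r, s ∈ R satisfy rsr = srs. Then: (i) for all s, u ∈ R with s ≠ u and su = us, the endomorphisms τ_s and τ_u commute; (ii) for all s, u ∈ R with su ≠ us, the endomorphism τ_s commutes with τ_s + τ_u + τ_{sus}. (These are the defining relations of the holonomy Lie algebra of the reflection arrangement, so t_s ↦ τ_s defines a representation of that Lie algebra.) -/
/-!
Write `v_t` for the basis vector of `t ∈ R`. The three defining cases of `τ_s` merge into one
formula `τ_s v_t = v_{sts} - φ_s(t) v_s`, where `φ_s(t) = tauCoeff m s t` is `1` if `s` and `t`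
do not commute, `1 - m` if `t = s` and `0` otherwise. Thus `τ_s = P_s - v_s ⊗ φ_s`, with `P_s`
the permutation of the basis by conjugation, and `φ_s(t)` is invariant under simultaneous
conjugation of `s` and `t`. Composing two such operators on a basis vector, this invariance
matches up the rank-one terms on both sides, and what remains are the permutation parts: for
commuting `s, u` one has `P_s P_u = P_u P_s`, and for braiding `s, u` with `c = sus = usu` one has
`P_s P_u = P_c P_s` and `P_s P_c = P_u P_s`, since `sc = us` and `cs = su`.
-/

open Finsupp

namespace HolonomyRep

section Coefficient

variable {k : Type*} [Zero k] [One k] [Sub k] {W : Type*} [Group W] [DecidableEq W]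

def tauCoeff (m : k) (s t : W) : k :=
  if s * t = t * s then if t = s then 1 - m else 0 else 1

lemma tauCoeff_of_not_commute {m : k} {s t : W} (h : s * t ≠ t * s) : tauCoeff m s t = 1 := by
  rw [tauCoeff, if_neg h]

lemma tauCoeff_of_commute_of_ne {m : k} {s t : W} (h : s * t = t * s) (hne : t ≠ s) :
    tauCoeff m s t = 0 := by
  rw [tauCoeff, if_pos h, if_neg hne]

lemma tauCoeff_conj (m : k) (g s t : W) :
    tauCoeff m (g * s * g⁻¹) (g * t * g⁻¹) = tauCoeff m s t := by
  have hcomm :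
      g * s * g⁻¹ * (g * t * g⁻¹) = g * t * g⁻¹ * (g * s * g⁻¹) ↔ s * t = t * s := by
    rw [conj_mul, conj_mul, conj_injective.eq_iff]
  simp only [tauCoeff, hcomm, conj_injective.eq_iff]

lemma tauCoeff_conj_of_mul_self {m : k} {g a b : W} (hg : g * g = 1) (hab : g * a * g = b)
    (t : W) : tauCoeff m b (g * t * g) = tauCoeff m a t := by
  rw [← hab, ← tauCoeff_conj m g a t, inv_eq_of_mul_eq_one_right hg]

end Coefficient

lemma mul_mul_cancel_left_of_mul_self {G : Type*} [Monoid G] {g : G} (hg : g * g = 1) (x : G) :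
    g * (g * x) = x := by
  rw [← mul_assoc, hg, one_mul]

section Conj

variable {W : Type*} [Group W] {R : Set W} (hR : ∀ s ∈ R, ∀ t ∈ R, s * t * s ∈ R)

def conj (s t : R) : R := ⟨s * t * s, hR s s.2 t t.2⟩

@[simp] lemma coe_conj (s t : R) : (conj hR s t : W) = s * t * s := rfl

lemma conj_conj {s : R} (hs : (s : W) * s = 1) (u t : R) :
    conj hR s (conj hR u t) = conj hR (conj hR s u) (conj hR s t) :=
  Subtype.ext <| by simp only [coe_conj, mul_assoc, mul_mul_cancel_left_of_mul_self hs]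

end Conj

section Tau

variable {k : Type*} [CommRing k] {m : k} {W : Type*} [Group W] [DecidableEq W] {R : Set W}
  {hR : ∀ s ∈ R, ∀ t ∈ R, s * t * s ∈ R} (hsq : ∀ s : R, (s : W) * s = 1)
  {τ : R → (R →₀ k) →ₗ[k] (R →₀ k)}

include hsq in
lemma tau_single_eq
    (hτ₁ : ∀ s u : R, (s : W) * u ≠ u * s → ∀ c : R, (c : W) = s * u * s →
      τ s (single u 1) = single c 1 - single s 1)
    (hτ₂ : ∀ s u : R, (s : W) * u = u * s → u ≠ s → τ s (single u 1) = single u 1)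
    (hτ₃ : ∀ s : R, τ s (single s 1) = m • single s 1) (s t : R) :
    τ s (single t 1) = single (conj hR s t) 1 - tauCoeff m (s : W) t • single s 1 := by
  by_cases hst : (s : W) * t = t * s
  · have hfix : conj hR s t = t := Subtype.ext <| by
      rw [coe_conj, hst, mul_assoc, hsq, mul_one]
    rw [hfix]
    by_cases hts : t = s
    · subst hts
      rw [tauCoeff, if_pos rfl, if_pos rfl, hτ₃, sub_smul, one_smul, sub_sub_cancel]
    · rw [hτ₂ s t hst hts, tauCoeff_of_commute_of_ne hst (Subtype.coe_injective.ne hts),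
        zero_smul, sub_zero]
  · rw [hτ₁ s t hst (conj hR s t) rfl, tauCoeff_of_not_commute hst, one_smul]

variable (hτ : ∀ s t : R,
  τ s (single t 1) = single (conj hR s t) 1 - tauCoeff m (s : W) t • single s 1)
include hsq hτ

lemma tau_comp_comm_of_commute {s u : R} (hsu : (s : W) * u = u * s) (hne : s ≠ u) :
    τ s ∘ₗ τ u = τ u ∘ₗ τ s := by
  have hus : (u : W) * s = s * u := hsu.symm
  have hsus : (s : W) * u * s = u := by rw [hsu, mul_assoc, hsq, mul_one]
  have husu : (u : W) * s * u = s := by rw [hus, mul_assoc, hsq, mul_one]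
  have hsu' : conj hR s u = u := Subtype.ext hsus
  have hus' : conj hR u s = s := Subtype.ext husu
  refine lhom_ext' fun t => LinearMap.ext_ring ?_
  simp only [LinearMap.comp_apply, lsingle_apply, hτ, map_sub, map_smul, coe_conj,
    tauCoeff_conj_of_mul_self (hsq s) hsus, tauCoeff_conj_of_mul_self (hsq u) husu,
    tauCoeff_of_commute_of_ne hsu (Subtype.coe_injective.ne hne.symm),
    tauCoeff_of_commute_of_ne hus (Subtype.coe_injective.ne hne)]
  rw [conj_conj hR (hsq s), hsu', hus']
  module

lemma tau_comp_add_comm_of_braid {s u c : R} (hsu : (s : W) * u ≠ u * s)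
    (hb : (s : W) * u * s = u * s * u) (hc : (c : W) = s * u * s) :
    τ s ∘ₗ (τ u + τ c) = (τ u + τ c) ∘ₗ τ s := by
  have hss : ∀ (a : R) (x : W), a * (a * x) = x :=
    fun a => mul_mul_cancel_left_of_mul_self (hsq a)
  have hscs : (s : W) * c * s = u := by simp only [hc, mul_assoc, hsq, hss, mul_one]
  have husu : (u : W) * s * u = c := by rw [hc, hb]
  have hcsc : (c : W) * s * c = u := by simp only [hc, mul_assoc, hss, hb]
  have hcuc : (c : W) * u * c = s := by simp only [← hcsc, mul_assoc, hsq, hss, mul_one]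
  have hucu : (u : W) * c * u = s := by simp only [hc, mul_assoc, hsq, hss, mul_one, hb]
  have hsc : (s : W) * c ≠ c * s := by
    simpa only [hc, mul_assoc, hsq, hss, mul_one, ne_comm] using hsu
  have hsu' : conj hR s u = c := Subtype.ext hc.symm
  have hsc' : conj hR s c = u := Subtype.ext hscs
  have hus' : conj hR u s = c := Subtype.ext husu
  have hcs' : conj hR c s = u := Subtype.ext hcsc
  refine lhom_ext' fun t => LinearMap.ext_ring ?_
  simp only [LinearMap.comp_apply, LinearMap.add_apply, lsingle_apply, hτ, map_add, map_sub,
    map_smul, coe_conj, tauCoeff_conj_of_mul_self (hsq u) hucu,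
    tauCoeff_conj_of_mul_self (hsq c) hcuc,
    tauCoeff_conj_of_mul_self (hsq s) hscs, tauCoeff_conj_of_mul_self (hsq s) hc.symm,
    tauCoeff_of_not_commute hsu, tauCoeff_of_not_commute hsu.symm, tauCoeff_of_not_commute hsc,
    tauCoeff_of_not_commute hsc.symm]
  rw [conj_conj hR (hsq s) u, conj_conj hR (hsq s) c, hsu', hsc', hus', hcs']
  module

end Tau

end HolonomyRep

open HolonomyRep in
theorem tau_holonomy_relations_general
    (k : Type) [Field k] (m : k)
    (W : Type) [Group W] (R : Set W)
    (hinv : ∀ s ∈ R, s * s = 1 ∧ s ≠ 1)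
    (hconj : ∀ w : W, ∀ s ∈ R, w * s * w⁻¹ ∈ R)
    (τ : R → ((R →₀ k) →ₗ[k] (R →₀ k)))
    (hτ₁ : ∀ s u : R, (s : W) * u ≠ u * s → ∀ c : R, (c : W) = s * u * s →
      τ s (Finsupp.single u 1) = Finsupp.single c 1 - Finsupp.single s 1)
    (hτ₂ : ∀ s u : R, (s : W) * u = u * s → u ≠ s →
      τ s (Finsupp.single u 1) = Finsupp.single u 1)
    (hτ₃ : ∀ s : R, τ s (Finsupp.single s 1) = m • Finsupp.single s 1)
    -- any two non-commuting elements of `R` braid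
    (hbraid : ∀ r s : W, r ∈ R → s ∈ R → r * s ≠ s * r → r * s * r = s * r * s) :
    (∀ s u : R, s ≠ u → (s : W) * u = u * s → τ s ∘ₗ τ u = τ u ∘ₗ τ s) ∧
    (∀ s u : R, (s : W) * u ≠ u * s → ∀ c : R, (c : W) = s * u * s →
      τ s ∘ₗ (τ s + τ u + τ c) = (τ s + τ u + τ c) ∘ₗ τ s) := by
  classical
  have hsq : ∀ s : R, (s : W) * s = 1 := fun s => (hinv s s.2).1
  have hR : ∀ s ∈ R, ∀ t ∈ R, s * t * s ∈ R := fun s hs t ht => by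
    simpa only [inv_eq_of_mul_eq_one_right (hinv s hs).1] using hconj s t ht
  have hτ := tau_single_eq (hR := hR) hsq hτ₁ hτ₂ hτ₃
  refine ⟨fun s u hne hsu => tau_comp_comm_of_commute hsq hτ hsu hne,
    fun s u hsu c hc => ?_⟩
  rw [add_assoc, LinearMap.comp_add, LinearMap.add_comp,
    tau_comp_add_comm_of_braid hsq hτ hsu (hbraid s u s.2 u.2 hsu) hc]

theorem tau_holonomy_relations
    (k : Type) [Field k] [CharZero k] (m : k)
    (W : Type) [Group W] (R : Set W) (hfin : R.Finite)
    (hinv : ∀ s ∈ R, s * s = 1 ∧ s ≠ 1)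
    (hconj : ∀ w : W, ∀ s ∈ R, w * s * w⁻¹ ∈ R)
    (τ : R → ((R →₀ k) →ₗ[k] (R →₀ k)))
    (hτ₁ : ∀ s u : R, (s : W) * u ≠ u * s → ∀ c : R, (c : W) = s * u * s →
      τ s (Finsupp.single u 1) = Finsupp.single c 1 - Finsupp.single s 1)
    (hτ₂ : ∀ s u : R, (s : W) * u = u * s → u ≠ s →
      τ s (Finsupp.single u 1) = Finsupp.single u 1)
    (hτ₃ : ∀ s : R, τ s (Finsupp.single s 1) = m • Finsupp.single s 1)
    -- any two non-commuting elements of `R` braid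
    (hbraid : ∀ r s : W, r ∈ R → s ∈ R → r * s ≠ s * r → r * s * r = s * r * s) :
    (∀ s u : R, s ≠ u → (s : W) * u = u * s → τ s ∘ₗ τ u = τ u ∘ₗ τ s) ∧
    (∀ s u : R, (s : W) * u ≠ u * s → ∀ c : R, (c : W) = s * u * s →
      τ s ∘ₗ (τ s + τ u + τ c) = (τ s + τ u + τ c) ∘ₗ τ s) :=
  tau_holonomy_relations_general k m W R hinv hconj τ hτ₁ hτ₂ hτ₃ hbraid
end

section
/- Assume moreover that k is algebraically closed, that R is a single conjugacy class of W, that R generates W, and that any two non-commuting elements r, s ∈ R satisfy rsr = srs. Let c = card{s' ∈ R : s' ≠ s₀ and s's₀ = s₀s'} for some fixed s₀ ∈ R (this number is independent of the choice of s₀). If V is semisimple as a module over the subalgebra of End(V) generated by {τ_s : s ∈ R}, and if m ≠ card(R) − c and m ≠ −1, then the only subspaces of V invariant under all the τ_s, s ∈ R, are 0 and V. -/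
/- `W` is a group, `R ⊆ W` a finite set of involutions closed under conjugation,
`V = (R →₀ k)` the `k`-vector space with basis `(v_u)_{u ∈ R}` where `v_u = single u 1`,
and `τ s` is the endomorphism of `V` determined by:
`τ_s v_u = v_{sus} − v_s` if `su ≠ us`; `τ_s v_u = v_u` if `su = us` and `u ≠ s`;
`τ_s v_s = m v_s`. -/
theorem tau_irreducible
    (k : Type) [Field k] [CharZero k] [IsAlgClosed k] (m : k)
    (W : Type) [Group W] (R : Set W) (hfin : R.Finite)
    (hinv : ∀ s ∈ R, s * s = 1 ∧ s ≠ 1)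
    (hconj : ∀ w : W, ∀ s ∈ R, w * s * w⁻¹ ∈ R)
    -- `R` is a single conjugacy class of `W`
    (hclass : ∀ s u : R, ∃ w : W, w * s * w⁻¹ = (u : W))
    -- `R` generates `W`
    (hgen : Subgroup.closure R = ⊤)
    -- any two non-commuting elements of `R` braid
    (hbraid : ∀ r s : W, r ∈ R → s ∈ R → r * s ≠ s * r → r * s * r = s * r * s)
    (τ : R → ((R →₀ k) →ₗ[k] (R →₀ k)))
    (hτ₁ : ∀ s u : R, (s : W) * u ≠ u * s → ∀ c : R, (c : W) = s * u * s →
      τ s (Finsupp.single u 1) = Finsupp.single c 1 - Finsupp.single s 1)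
    (hτ₂ : ∀ s u : R, (s : W) * u = u * s → u ≠ s →
      τ s (Finsupp.single u 1) = Finsupp.single u 1)
    (hτ₃ : ∀ s : R, τ s (Finsupp.single s 1) = m • Finsupp.single s 1)
    (s₀ : R) (c : ℕ)
    (hc : c = Set.ncard {s' : R | s' ≠ s₀ ∧ (s' : W) * s₀ = s₀ * s'})
    -- `V` is semisimple under the action of the `τ s`
    (hss : ∀ U : Submodule k (R →₀ k), (∀ s : R, ∀ v ∈ U, τ s v ∈ U) →
      ∃ U' : Submodule k (R →₀ k), (∀ s : R, ∀ v ∈ U', τ s v ∈ U') ∧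
        U ⊓ U' = ⊥ ∧ U ⊔ U' = ⊤)
    (hm₁ : m ≠ (R.ncard : k) - c) (hm₂ : m ≠ -1) :
    ∀ U : Submodule k (R →₀ k), (∀ s : R, ∀ v ∈ U, τ s v ∈ U) → U = ⊥ ∨ U = ⊤ := by
  classical
  intro U hU
  haveI : Fintype R := hfin.fintype
  -- basic group facts
  have hs1 : ∀ s : R, (s : W) * s = 1 := fun s => (hinv s s.2).1
  have hsinv : ∀ s : R, (s : W)⁻¹ = s := fun s => inv_eq_of_mul_eq_one_left (hs1 s)
  have hmem : ∀ (w : W) (u : R), w * (u : W) * w⁻¹ ∈ R := fun w u => hconj w u u.2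
  have hσmem : ∀ s u : R, (s : W) * u * s ∈ R := by
    intro s u
    have h := hmem s u
    rwa [hsinv s] at h
  let σ : R → R → R := fun s u => ⟨(s : W) * u * s, hσmem s u⟩
  have σdef : ∀ s u : R, ((σ s u : R) : W) = (s : W) * u * s := fun _ _ => rfl
  have hσσ : ∀ s u : R, σ s (σ s u) = u := by
    intro s u
    apply Subtype.ext
    rw [σdef, σdef]
    rw [show (s : W) * ((s : W) * u * s) * s
        = ((s : W) * s) * ((u : W) * ((s : W) * s)) from by group, hs1, one_mul, mul_one]
  have key_nc : ∀ s u : R, (s : W) * u ≠ u * s →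
      τ s (Finsupp.single u 1) = Finsupp.single (σ s u) 1 - Finsupp.single s 1 :=
    fun s u h => hτ₁ s u h (σ s u) (σdef s u)
  have hσnc : ∀ s u : R, (s : W) * u ≠ u * s → (s : W) * (σ s u) ≠ (σ s u) * s := by
    intro s u h heq
    apply h
    rw [σdef] at heq
    rw [show (s : W) * ((s : W) * u * s) = ((s : W) * s) * ((u : W) * s) from by group,
      hs1, one_mul,
      show ((s : W) * u * s) * s = ((s : W) * u) * ((s : W) * s) from by group,
      hs1, mul_one] at heq
    exact heq.symm
  -- the double application on basis vectors
  have Φ_nc : ∀ s u : R, (s : W) * u ≠ u * s →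
      τ s (τ s (Finsupp.single u 1))
        = Finsupp.single u 1 - (1 + m) • Finsupp.single s 1 := by
    intro s u h
    rw [key_nc s u h, map_sub, hτ₃ s, key_nc s (σ s u) (hσnc s u h), hσσ s u]
    rw [add_smul, one_smul]
    abel
  -- the scalar
  set cc : R → R → k := fun s u =>
    if (s : W) * u ≠ u * s then -(1 + m) else if u = s then m * m - 1 else 0 with hcc
  have L1 : ∀ s u : R, τ s (τ s (Finsupp.single u 1)) - Finsupp.single u 1
      = cc s u • Finsupp.single s 1 := by
    intro s u
    by_cases h : (s : W) * u ≠ u * s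
    · rw [Φ_nc s u h, sub_sub_cancel_left]
      rw [show cc s u = -(1 + m) from if_pos h, neg_smul]
    · push_neg at h
      by_cases he : u = s
      · subst he
        rw [hτ₃ u, map_smul, hτ₃ u, smul_smul]
        have : cc u u = m * m - 1 := by simp [hcc]
        rw [this, sub_smul, one_smul]
      · rw [hτ₂ s u h he, hτ₂ s u h he, sub_self]
        have : cc s u = 0 := by simp [hcc, h, he]
        rw [this, zero_smul]
  -- Fact A: the double application lands in the line spanned by v_s
  have factA : ∀ (s : R) (y : R →₀ k), ∃ d : k,
      τ s (τ s y) - y = d • Finsupp.single s 1 := by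
    intro s y
    induction y using Finsupp.induction_linear with
    | zero => exact ⟨0, by simp⟩
    | add f g hf hg =>
      obtain ⟨d1, h1⟩ := hf
      obtain ⟨d2, h2⟩ := hg
      refine ⟨d1 + d2, ?_⟩
      rw [map_add, map_add, add_smul, ← h1, ← h2]
      abel
    | single a b =>
      refine ⟨b * cc s a, ?_⟩
      have hb : Finsupp.single a b = b • Finsupp.single a 1 := by
        rw [Finsupp.smul_single, smul_eq_mul, mul_one]
      rw [hb, map_smul, map_smul, ← smul_sub, L1 s a, smul_smul]
  have h1m : (1 : k) + m ≠ 0 := by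
    intro h
    apply hm₂
    linear_combination h
  -- propagation of basis vectors in invariant subspaces
  have F : ∀ (V' : Submodule k (R →₀ k)), (∀ s : R, ∀ v ∈ V', τ s v ∈ V') →
      ∀ r u : R, Finsupp.single u 1 ∈ V' → Finsupp.single (σ r u) 1 ∈ V' := by
    intro V' hV' r u hu
    by_cases h : (r : W) * u ≠ u * r
    · have h1 : τ r (Finsupp.single u 1) ∈ V' := hV' r _ hu
      have h2 : τ r (τ r (Finsupp.single u 1)) ∈ V' := hV' r _ h1
      have h3 : τ r (τ r (Finsupp.single u 1)) - Finsupp.single u 1 ∈ V' :=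
        sub_mem h2 hu
      rw [Φ_nc r u h, sub_sub_cancel_left] at h3
      have h4 : (1 + m) • (Finsupp.single r 1 : R →₀ k) ∈ V' := by
        have := V'.smul_mem (-1 : k) h3
        rwa [neg_smul, one_smul, neg_neg] at this
      have h5 : (Finsupp.single r 1 : R →₀ k) ∈ V' := by
        have := V'.smul_mem (1 + m)⁻¹ h4
        rwa [smul_smul, inv_mul_cancel₀ h1m, one_smul] at this
      have h6 : (Finsupp.single (σ r u) 1 : R →₀ k)
          = τ r (Finsupp.single u 1) + Finsupp.single r 1 := by
        rw [key_nc r u h, sub_add_cancel]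
      rw [h6]
      exact add_mem h1 h5
    · push_neg at h
      have he : σ r u = u := by
        apply Subtype.ext
        rw [σdef, h, mul_assoc, hs1, mul_one]
      rwa [he]
  -- connectivity: from one basis vector we get all of them
  have reach : ∀ (V' : Submodule k (R →₀ k)), (∀ s : R, ∀ v ∈ V', τ s v ∈ V') →
      ∀ s t : R, Finsupp.single s 1 ∈ V' → Finsupp.single t 1 ∈ V' := by
    intro V' hV' s t hs
    obtain ⟨w, hw⟩ := hclass s t
    have hw' : w ∈ Subgroup.closure R := by rw [hgen]; trivial
    have key : ∀ u : R, (Finsupp.single u 1 ∈ V' ↔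
        Finsupp.single (⟨w * u * w⁻¹, hmem w u⟩ : R) 1 ∈ V') := by
      refine Subgroup.closure_induction
        (p := fun g _ => ∀ u : R, (Finsupp.single u 1 ∈ V' ↔
          Finsupp.single (⟨g * u * g⁻¹, hmem g u⟩ : R) 1 ∈ V'))
        ?_ ?_ ?_ ?_ hw'
      · intro x hx u
        have hxeq : (⟨x * u * x⁻¹, hmem x u⟩ : R) = σ ⟨x, hx⟩ u := by
          apply Subtype.ext
          rw [σdef]
          show x * (u : W) * x⁻¹ = x * u * x
          rw [show x⁻¹ = ((⟨x, hx⟩ : R) : W)⁻¹ from rfl, hsinv ⟨x, hx⟩]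
        rw [hxeq]
        constructor
        · exact F V' hV' ⟨x, hx⟩ u
        · intro h
          have := F V' hV' ⟨x, hx⟩ (σ ⟨x, hx⟩ u) h
          rwa [hσσ] at this
      · intro u
        have : (⟨(1 : W) * u * (1 : W)⁻¹, hmem 1 u⟩ : R) = u := by
          apply Subtype.ext; simp
        rw [this]
      · intro x y hx hy hpx hpy u
        have e : (⟨x * y * (u : W) * (x * y)⁻¹, hmem (x * y) u⟩ : R)
            = ⟨x * ((⟨y * (u : W) * y⁻¹, hmem y u⟩ : R) : W) * x⁻¹, hmem x _⟩ := by
          apply Subtype.ext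
          show x * y * (u : W) * (x * y)⁻¹ = x * (y * (u : W) * y⁻¹) * x⁻¹
          group
        rw [e]
        exact (hpy u).trans (hpx ⟨y * (u : W) * y⁻¹, hmem y u⟩)
      · intro x hx hpx u
        have e : (⟨x * ((⟨x⁻¹ * (u : W) * x⁻¹⁻¹, hmem x⁻¹ u⟩ : R) : W) * x⁻¹,
            hmem x _⟩ : R) = u := by
          apply Subtype.ext
          show x * (x⁻¹ * (u : W) * x⁻¹⁻¹) * x⁻¹ = u
          group
        have h := hpx ⟨x⁻¹ * (u : W) * x⁻¹⁻¹, hmem x⁻¹ u⟩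
        rw [e] at h
        exact h.symm
    have ht' : (⟨w * (s : W) * w⁻¹, hmem w s⟩ : R) = t := Subtype.ext hw
    rw [← ht']
    exact (key s).mp hs
  -- if some Φ_s is nonzero on an invariant subspace, the subspace is everything
  have toTop : ∀ (V' : Submodule k (R →₀ k)), (∀ s : R, ∀ v ∈ V', τ s v ∈ V') →
      (∃ (s : R) (y : R →₀ k), y ∈ V' ∧ τ s (τ s y) - y ≠ 0) → V' = ⊤ := by
    rintro V' hV' ⟨s, y, hy, hne⟩
    obtain ⟨d, hd⟩ := factA s y
    have hd0 : d ≠ 0 := by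
      rintro rfl
      exact hne (by rw [hd, zero_smul])
    have hmem1 : τ s (τ s y) - y ∈ V' := sub_mem (hV' s _ (hV' s _ hy)) hy
    have hsV : (Finsupp.single s 1 : R →₀ k) ∈ V' := by
      have := V'.smul_mem d⁻¹ hmem1
      rwa [hd, smul_smul, inv_mul_cancel₀ hd0, one_smul] at this
    rw [eq_top_iff]
    intro y' hy'
    clear hy' hne hd hmem1
    induction y' using Finsupp.induction_linear with
    | zero => exact zero_mem V'
    | add f g hf hg => exact add_mem hf hg
    | single a b =>
      have hb : Finsupp.single a b = b • Finsupp.single a 1 := by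
        rw [Finsupp.smul_single, smul_eq_mul, mul_one]
      rw [hb]
      exact V'.smul_mem b (reach V' hV' s a hsV)
  -- the vector x = sum of all basis vectors
  set x : R →₀ k := ∑ u : R, Finsupp.single u 1 with hx
  set N : ℕ := (Finset.univ.filter (fun u : R => (s₀ : W) * u ≠ u * s₀)).card with hN
  have sumcc : ∑ u : R, cc s₀ u = (m * m - 1) + (-(1 + m)) * N := by
    have hsplit : ∀ u : R, cc s₀ u
        = (if (s₀ : W) * u ≠ u * s₀ then -(1 + m) else 0)
          + (if u = s₀ then m * m - 1 else 0) := by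
      intro u
      by_cases h : (s₀ : W) * u ≠ u * s₀
      · have hne : u ≠ s₀ := by rintro rfl; exact h rfl
        simp [hcc, h, hne]
      · push_neg at h
        by_cases he : u = s₀ <;> simp [hcc, h, he]
    rw [Finset.sum_congr rfl (fun u _ => hsplit u), Finset.sum_add_distrib,
      Finset.sum_ite, Finset.sum_const, Finset.sum_const_zero, add_zero,
      Finset.sum_ite_eq' Finset.univ s₀ (fun _ => m * m - 1),
      if_pos (Finset.mem_univ s₀), ← hN]
    rw [nsmul_eq_mul]
    ring
  have Φx : τ s₀ (τ s₀ x) - x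
      = ((m * m - 1) + (-(1 + m)) * N) • Finsupp.single s₀ 1 := by
    rw [← sumcc, hx, map_sum, map_sum, ← Finset.sum_sub_distrib,
      Finset.sum_congr rfl (fun u _ => L1 s₀ u), ← Finset.sum_smul]
  -- the coefficient is nonzero
  have hcard : Fintype.card R = N + (c + 1) := by
    have h1 : (Finset.univ.filter (fun u : R => (s₀ : W) * u ≠ u * s₀)).card
        + (Finset.univ.filter (fun u : R => ¬((s₀ : W) * u ≠ u * s₀))).card
        = Finset.univ.card :=
      Finset.card_filter_add_card_filter_not _
    have h2 : Finset.univ.filter (fun u : R => ¬((s₀ : W) * u ≠ u * s₀))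
        = insert s₀ (Finset.univ.filter
            (fun u : R => u ≠ s₀ ∧ (u : W) * s₀ = s₀ * u)) := by
      ext u
      simp only [Finset.mem_filter, Finset.mem_univ, true_and, Finset.mem_insert,
        not_not]
      constructor
      · intro h
        by_cases he : u = s₀
        · exact Or.inl he
        · exact Or.inr ⟨he, h.symm⟩
      · rintro (rfl | ⟨_, h⟩)
        · rfl
        · exact h.symm
    have h3 : s₀ ∉ Finset.univ.filter
        (fun u : R => u ≠ s₀ ∧ (u : W) * s₀ = s₀ * u) := by
      simp
    have h4 : c = (Finset.univ.filter
        (fun u : R => u ≠ s₀ ∧ (u : W) * s₀ = s₀ * u)).card := by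
      rw [hc, Set.ncard_eq_toFinset_card']
      congr 1
      ext u
      simp
    rw [h2, Finset.card_insert_of_notMem h3, ← h4] at h1
    rw [← Finset.card_univ, ← h1, hN]
  have hncard : R.ncard = Fintype.card R := by
    rw [Set.ncard_eq_toFinset_card', Set.toFinset_card]
  have hcoef : (m * m - 1) + (-(1 + m)) * (N : k) ≠ 0 := by
    intro h0
    have hfac : ((1 : k) + m) * (m - 1 - N) = 0 := by
      rw [show ((1 : k) + m) * (m - 1 - N)
          = (m * m - 1) + (-(1 + m)) * (N : k) from by ring, h0]
    rcases mul_eq_zero.mp hfac with h | h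
    · exact h1m h
    · have hck : (R.ncard : k) = (N : k) + 1 + c := by
        rw [hncard, hcard]
        push_cast
        ring
      refine hm₁ ?_
      rw [hck]
      linear_combination h
  -- main argument
  obtain ⟨U', hU', hinf, hsup⟩ := hss U hU
  by_cases hcase : ∃ (s : R) (y : R →₀ k), y ∈ U ∧ τ s (τ s y) - y ≠ 0
  · right
    exact toTop U hU hcase
  · by_cases hcase' : ∃ (s : R) (y : R →₀ k), y ∈ U' ∧ τ s (τ s y) - y ≠ 0
    · left
      have hU'top : U' = ⊤ := toTop U' hU' hcase'
      rw [hU'top, inf_top_eq] at hinf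
      exact hinf
    · exfalso
      push_neg at hcase hcase'
      have hxmem : x ∈ U ⊔ U' := by rw [hsup]; trivial
      obtain ⟨a, ha, b, hb, hab⟩ := Submodule.mem_sup.mp hxmem
      have h1 : τ s₀ (τ s₀ a) - a = 0 := hcase s₀ a ha
      have h2 : τ s₀ (τ s₀ b) - b = 0 := hcase' s₀ b hb
      have h3 : τ s₀ (τ s₀ x) - x = 0 := by
        rw [← hab, map_add, map_add,
          show τ s₀ (τ s₀ a) + τ s₀ (τ s₀ b) - (a + b)
            = (τ s₀ (τ s₀ a) - a) + (τ s₀ (τ s₀ b) - b) from by abel, h1, h2,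
          add_zero]
      rw [Φx] at h3
      exact smul_ne_zero hcoef
        (fun hz => (one_ne_zero : (1 : k) ≠ 0) (Finsupp.single_eq_zero.mp hz)) h3
end

section
/- Let n ≥ 3, let k be a field of characteristic 0 and m ∈ k. Let T be the set of transpositions of the symmetric group on n letters, V the k-vector space with basis (v_t)_{t ∈ T}, and B the symmetric bilinear form on V defined by B(v_t, v_t) = m − 1, B(v_t, v_u) = −1 if tu ≠ ut, and B(v_t, v_u) = 0 if t ≠ u and tu = ut. Then the determinant of the Gram matrix of B in the basis (v_t)_{t ∈ T} equals (m+1)^{n(n−3)/2} · (m−n+3)^{n−1} · (m−2n+3). Moreover, when k = ℝ, the form B is positive definite if and only if m > 2n − 3. -/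
noncomputable instance instFintypeSwaps (n : ℕ) :
    Fintype {t : Equiv.Perm (Fin n) // t.IsSwap} :=
  Fintype.ofFinite _

/-- The Gram matrix of the symmetric bilinear form `B` on the vector space with basis indexed
by the transpositions of the symmetric group on `n` letters, defined by
`B(v_t, v_t) = m − 1`, `B(v_t, v_u) = −1` if `tu ≠ ut`, and `B(v_t, v_u) = 0` otherwise. -/
noncomputable def transpositionGram (k : Type) [Field k] (n : ℕ) (m : k) :
    Matrix {t : Equiv.Perm (Fin n) // t.IsSwap} {t : Equiv.Perm (Fin n) // t.IsSwap} k :=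
  fun t u =>
    if t = u then m - 1
    else if (t : Equiv.Perm (Fin n)) * u = u * t then 0
    else -1

open Equiv Finset Matrix Polynomial

section Aux

variable {n : ℕ}

abbrev Sw (n : ℕ) := {t : Equiv.Perm (Fin n) // t.IsSwap}
lemma exists_swap_form {t : Equiv.Perm (Fin n)} (ht : t.IsSwap) {x : Fin n}
    (hx : t x ≠ x) : ∃ y, y ≠ x ∧ t = Equiv.swap x y := by
  obtain ⟨a, b, hab, rfl⟩ := ht
  rcases (Equiv.swap_apply_ne_self_iff.mp hx).2 with rfl | rfl
  · exact ⟨b, Ne.symm hab, rfl⟩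
  · exact ⟨a, hab, Equiv.swap_comm a x⟩

lemma noncomm_swaps {x b d : Fin n} (hbx : b ≠ x) (hdx : d ≠ x) (hbd : b ≠ d) :
    Equiv.swap x b * Equiv.swap x d ≠ Equiv.swap x d * Equiv.swap x b := by
  intro h
  have := congrFun (congrArg (fun p => p.toFun) h) d
  simp only [Equiv.Perm.mul_apply, Equiv.toFun_as_coe] at this
  rw [Equiv.swap_apply_right, Equiv.swap_apply_left,
    Equiv.swap_apply_of_ne_of_ne hdx hbd.symm, Equiv.swap_apply_right] at this
  exact hbx this

lemma support_inter_card (t u : Sw n) :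
    ((t : Equiv.Perm (Fin n)).support ∩ (u : Equiv.Perm (Fin n)).support).card =
      if t = u then 2 else if (t : Equiv.Perm (Fin n)) * u = u * t then 0 else 1 := by
  by_cases htu : t = u
  · subst htu
    simp [Finset.inter_self, Equiv.Perm.card_support_eq_two.mpr t.2]
  rw [if_neg htu]
  by_cases hcomm : (t : Equiv.Perm (Fin n)) * u = u * t
  · rw [if_pos hcomm, Finset.card_eq_zero, ← Finset.not_nonempty_iff_eq_empty]
    rintro ⟨x, hx⟩
    simp only [Finset.mem_inter, Equiv.Perm.mem_support] at hx
    obtain ⟨b, hbx, hb⟩ := exists_swap_form t.2 hx.1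
    obtain ⟨d, hdx, hd⟩ := exists_swap_form u.2 hx.2
    have hbd : b ≠ d := by
      rintro rfl
      exact htu (Subtype.ext (hb.trans hd.symm))
    exact noncomm_swaps hbx hdx hbd (hb ▸ hd ▸ hcomm)
  · rw [if_neg hcomm]
    have hnd : ¬ (t : Equiv.Perm (Fin n)).Disjoint u := fun h => hcomm h.commute
    rw [Equiv.Perm.Disjoint] at hnd
    push_neg at hnd
    obtain ⟨x, hx1, hx2⟩ := hnd
    obtain ⟨b, hbx, hb⟩ := exists_swap_form t.2 hx1
    obtain ⟨d, hdx, hd⟩ := exists_swap_form u.2 hx2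
    have hbd : b ≠ d := by
      rintro rfl
      exact htu (Subtype.ext (hb.trans hd.symm))
    rw [Finset.card_eq_one]
    refine ⟨x, ?_⟩
    rw [hb, hd, Equiv.Perm.support_swap hbx.symm, Equiv.Perm.support_swap hdx.symm]
    ext z
    simp only [Finset.mem_inter, Finset.mem_insert, Finset.mem_singleton]
    constructor
    · rintro ⟨rfl | rfl, h2⟩
      · rfl
      · rcases h2 with rfl | rfl
        · exact absurd rfl hbx
        · exact absurd rfl hbd
    · rintro rfl; exact ⟨Or.inl rfl, Or.inl rfl⟩

noncomputable def movingEquiv (i : Fin n) :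
    {t : Sw n // (t : Equiv.Perm (Fin n)) i ≠ i} ≃ {x : Fin n // x ≠ i} where
  toFun t := ⟨(t.1 : Equiv.Perm (Fin n)) i, t.2⟩
  invFun x := ⟨⟨Equiv.swap i x.1, ⟨i, x.1, Ne.symm x.2, rfl⟩⟩, by
    simp only [Equiv.swap_apply_left]; exact x.2⟩
  left_inv t := by
    obtain ⟨y, hy, hform⟩ := exists_swap_form t.1.2 t.2
    apply Subtype.ext; apply Subtype.ext
    simp only [hform, Equiv.swap_apply_left]
  right_inv x := by
    apply Subtype.ext
    simp only [Equiv.swap_apply_left]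

lemma card_moving (i : Fin n) :
    (univ.filter (fun t : Sw n => (t : Equiv.Perm (Fin n)) i ≠ i)).card = n - 1 := by
  rw [← Fintype.card_subtype, Fintype.card_congr (movingEquiv i), Fintype.card_subtype,
    Finset.filter_ne', Finset.card_erase_of_mem (mem_univ i), Finset.card_univ, Fintype.card_fin]

lemma pair_filter {i j : Fin n} (hij : i ≠ j) :
    univ.filter (fun t : Sw n => (t : Equiv.Perm (Fin n)) i ≠ i ∧ (t : Equiv.Perm (Fin n)) j ≠ j)
      = {⟨Equiv.swap i j, ⟨i, j, hij, rfl⟩⟩} := by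
  ext t
  simp only [Finset.mem_filter, mem_univ, true_and, Finset.mem_singleton]
  constructor
  · rintro ⟨hi, hj⟩
    obtain ⟨y, hy, hform⟩ := exists_swap_form t.2 hi
    rw [hform] at hj
    rcases (Equiv.swap_apply_ne_self_iff.mp hj).2 with rfl | rfl
    · exact absurd rfl hij
    · exact Subtype.ext hform
  · rintro rfl
    constructor
    · simp only [Equiv.swap_apply_left]; exact hij.symm
    · simp only [Equiv.swap_apply_right]; exact hij

lemma card_Sw : 2 * Fintype.card (Sw n) = n * (n - 1) := by
  have key : ∑ t : Sw n, ∑ i : Fin n, (if (t : Equiv.Perm (Fin n)) i ≠ i then 1 else 0)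
      = ∑ i : Fin n, ∑ t : Sw n, (if (t : Equiv.Perm (Fin n)) i ≠ i then 1 else 0) :=
    Finset.sum_comm
  have lhs : ∀ t : Sw n, ∑ i : Fin n, (if (t : Equiv.Perm (Fin n)) i ≠ i then 1 else 0) = 2 := by
    intro t
    rw [← Finset.card_filter]
    exact Equiv.Perm.card_support_eq_two.mpr t.2
  have rhs : ∀ i : Fin n, ∑ t : Sw n, (if (t : Equiv.Perm (Fin n)) i ≠ i then 1 else 0) = n - 1 := by
    intro i
    rw [← Finset.card_filter]
    exact card_moving i
  rw [Finset.sum_congr rfl (fun t _ => lhs t), Finset.sum_congr rfl (fun i _ => rhs i),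
    Finset.sum_const, Finset.sum_const, Finset.card_univ, Finset.card_univ, Fintype.card_fin,
    smul_eq_mul, smul_eq_mul, mul_comm] at key
  exact key

end Aux

section Ring
variable (R : Type*) [CommRing R] (n : ℕ)

noncomputable def inc : Matrix (Fin n) (Sw n) R :=
  Matrix.of fun i t => if (t : Equiv.Perm (Fin n)) i = i then 0 else 1

noncomputable def gram (m : R) : Matrix (Sw n) (Sw n) R :=
  Matrix.of fun t u =>
    if t = u then m - 1
    else if (t : Equiv.Perm (Fin n)) * u = u * t then 0
    else -1

variable {R n}

lemma gram_map {S : Type*} [CommRing S] (f : R →+* S) (m : R) :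
    (_root_.gram R n m).map f = _root_.gram S n (f m) := by
  ext t u
  simp only [_root_.gram, Matrix.map_apply, Matrix.of_apply, apply_ite f, map_sub, map_neg,
    map_zero, f.map_one]

lemma tmul (t u : Sw n) :
    ((inc R n)ᵀ * inc R n) t u =
      (((t : Equiv.Perm (Fin n)).support ∩ (u : Equiv.Perm (Fin n)).support).card : R) := by
  have step : ∀ i : Fin n,
      (inc R n)ᵀ t i * inc R n i u
        = if i ∈ (t : Equiv.Perm (Fin n)).support ∩ (u : Equiv.Perm (Fin n)).support
          then 1 else 0 := by
    intro i
    simp only [inc, Matrix.transpose_apply, Matrix.of_apply, Finset.mem_inter,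
      Equiv.Perm.mem_support]
    by_cases h1 : (t : Equiv.Perm (Fin n)) i = i <;> by_cases h2 : (u : Equiv.Perm (Fin n)) i = i <;>
      simp [h1, h2]
  rw [Matrix.mul_apply, Finset.sum_congr rfl (fun i _ => step i), Finset.sum_boole,
    Finset.filter_mem_eq_inter, Finset.univ_inter]

lemma gram_eq (m : R) :
    _root_.gram R n m = (m + 1) • (1 : Matrix (Sw n) (Sw n) R) - (inc R n)ᵀ * inc R n := by
  ext t u
  rw [Matrix.sub_apply, Matrix.smul_apply, tmul, support_inter_card]
  by_cases htu : t = u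
  · subst htu
    simp only [if_pos rfl, Matrix.one_apply_eq, _root_.gram, Matrix.of_apply, smul_eq_mul, mul_one]
    push_cast
    ring
  · by_cases hcomm : (t : Equiv.Perm (Fin n)) * u = u * t <;>
      simp [_root_.gram, htu, hcomm, Matrix.one_apply_ne htu]

lemma mulT (i j : Fin n) :
    (inc R n * (inc R n)ᵀ) i j = if i = j then ((n - 1 : ℕ) : R) else 1 := by
  have step : ∀ t : Sw n,
      inc R n i t * (inc R n)ᵀ t j
        = if (t : Equiv.Perm (Fin n)) i ≠ i ∧ (t : Equiv.Perm (Fin n)) j ≠ j then 1 else 0 := by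
    intro t
    simp only [inc, Matrix.transpose_apply, Matrix.of_apply]
    by_cases h1 : (t : Equiv.Perm (Fin n)) i = i <;> by_cases h2 : (t : Equiv.Perm (Fin n)) j = j <;>
      simp [h1, h2]
  rw [Matrix.mul_apply, Finset.sum_congr rfl (fun t _ => step t), Finset.sum_boole]
  by_cases hij : i = j
  · subst hij
    rw [if_pos rfl, ← card_moving i]
    congr 2
    ext t
    simp [and_self]
  · rw [if_neg hij, pair_filter hij, Finset.card_singleton, Nat.cast_one]

end Ring

section Det

lemma det_smul_one_sub_comm {K : Type*} [Field K] {p q : Type*} [Fintype p] [Fintype q]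
    [DecidableEq p] [DecidableEq q] {z : K} (hz : z ≠ 0) (A : Matrix p q K) :
    (z • 1 - Aᵀ * A).det * z ^ (Fintype.card p) =
      (z • 1 - A * Aᵀ).det * z ^ (Fintype.card q) := by
  have e1 : z • (1 : Matrix q q K) - Aᵀ * A = z • (1 - z⁻¹ • (Aᵀ * A)) := by
    rw [smul_sub, smul_smul, mul_inv_cancel₀ hz, one_smul]
  have e2 : z • (1 : Matrix p p K) - A * Aᵀ = z • (1 - z⁻¹ • (A * Aᵀ)) := by
    rw [smul_sub, smul_smul, mul_inv_cancel₀ hz, one_smul]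
  have e3 : (1 - z⁻¹ • (Aᵀ * A)).det = (1 - z⁻¹ • (A * Aᵀ)).det := by
    rw [← Matrix.smul_mul, Matrix.det_one_sub_mul_comm, Matrix.mul_smul]
  rw [e1, e2, Matrix.det_smul, Matrix.det_smul, e3]
  ring

lemma det_smul_one_sub_allOnes {K : Type*} [Field K] {w : K} (hw : w ≠ 0) (N : ℕ) :
    (w • (1 : Matrix (Fin (N + 1)) (Fin (N + 1)) K)
        - Matrix.of (fun _ _ => (1 : K))).det = w ^ N * (w - (N + 1)) := by
  have e1 : w • (1 : Matrix (Fin (N + 1)) (Fin (N + 1)) K) - Matrix.of (fun _ _ => (1 : K))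
      = w • (1 + Matrix.replicateCol Unit (fun _ => -w⁻¹) * Matrix.replicateRow Unit (fun _ => (1 : K))) := by
    ext i j
    simp only [Matrix.sub_apply, Matrix.smul_apply, Matrix.of_apply, Matrix.add_apply,
      Matrix.mul_apply, Matrix.replicateCol_apply, Matrix.replicateRow_apply, Finset.univ_unique,
      Finset.sum_singleton, mul_one, smul_eq_mul, mul_add, mul_neg, mul_inv_cancel₀ hw]
    ring
  rw [e1, Matrix.det_smul, Matrix.det_one_add_replicateCol_mul_replicateRow]
  simp only [dotProduct, Finset.sum_const, Finset.card_univ, Fintype.card_fin,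
    nsmul_eq_mul, one_mul, mul_neg]
  field_simp
  push_cast
  ring

lemma det_gram {K : Type*} [Field K] (a : ℕ) (μ : K)
    (h1 : μ + 1 ≠ 0) (h2 : μ - ((a + 3 : ℕ) : K) + 3 ≠ 0) :
    (_root_.gram K (a + 3) μ).det
      = (μ + 1) ^ ((a + 3) * a / 2) * (μ - ((a + 3 : ℕ) : K) + 3) ^ (a + 2)
        * (μ - 2 * ((a + 3 : ℕ) : K) + 3) := by
  have h2E : 2 * Fintype.card (Sw (a + 3)) = (a + 3) * ((a + 3) - 1) := card_Sw
  have hprod : (a + 3) * ((a + 3) - 1) = (a + 3) * a + 2 * (a + 3) := by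
    have : (a + 3) - 1 = a + 2 := by omega
    rw [this]; ring
  have hEn : Fintype.card (Sw (a + 3)) = (a + 3) * a / 2 + (a + 3) := by omega
  have step1 := det_smul_one_sub_comm (z := μ + 1) h1 (inc K (a + 3))
  rw [Fintype.card_fin] at step1
  have hJ : (μ + 1) • (1 : Matrix (Fin (a + 3)) (Fin (a + 3)) K) - inc K (a + 3) * (inc K (a + 3))ᵀ
      = (μ - ((a + 3 : ℕ) : K) + 3) • 1 - Matrix.of (fun _ _ => (1 : K)) := by
    ext i j
    rw [Matrix.sub_apply, Matrix.sub_apply, mulT, Matrix.smul_apply, Matrix.smul_apply,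
      Matrix.of_apply]
    by_cases hij : i = j
    · subst hij
      rw [if_pos rfl]
      have h3 : ((a + 3 : ℕ) - 1 : ℕ) = (a + 2 : ℕ) := by omega
      rw [h3]
      simp only [Matrix.one_apply_eq, smul_eq_mul]
      push_cast
      ring
    · rw [if_neg hij]
      simp only [Matrix.one_apply_ne hij, smul_eq_mul]
      ring
  have hAllOnes : ((μ + 1) • (1 : Matrix (Fin (a + 3)) (Fin (a + 3)) K)
      - inc K (a + 3) * (inc K (a + 3))ᵀ).det
      = (μ - ((a + 3 : ℕ) : K) + 3) ^ (a + 2) * ((μ - ((a + 3 : ℕ) : K) + 3) - ((a + 2 : ℕ) + 1)) := by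
    rw [hJ]
    exact det_smul_one_sub_allOnes h2 (a + 2)
  rw [gram_eq]
  apply mul_right_cancel₀ (pow_ne_zero (a + 3) h1)
  rw [step1, hAllOnes, hEn, pow_add]
  push_cast
  ring

end Det

section Rest

variable {n : ℕ}

lemma det_gram_k (k : Type*) [Field k] (a : ℕ) (m : k) :
    (_root_.gram k (a + 3) m).det
      = (m + 1) ^ ((a + 3) * a / 2) * (m - ((a + 3 : ℕ) : k) + 3) ^ (a + 2)
        * (m - 2 * ((a + 3 : ℕ) : k) + 3) := by
  have halg : Function.Injective (algebraMap (Polynomial k) (RatFunc k)) :=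
    IsFractionRing.injective _ _
  have hmapX : algebraMap (Polynomial k) (RatFunc k) Polynomial.X = RatFunc.X :=
    RatFunc.algebraMap_X
  have h1' : (Polynomial.X + 1 : Polynomial k) ≠ 0 := by
    intro h
    have := congrArg (fun p => Polynomial.coeff p 1) h
    simp [Polynomial.coeff_one] at this
  have h2' : (Polynomial.X - ((a + 3 : ℕ) : Polynomial k) + 3 : Polynomial k) ≠ 0 := by
    intro h
    have := congrArg (fun p => Polynomial.coeff p 1) h
    simp [Polynomial.coeff_natCast_ite] at this
  have h1 : (RatFunc.X : RatFunc k) + 1 ≠ 0 := by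
    have e : (RatFunc.X : RatFunc k) + 1
        = algebraMap (Polynomial k) (RatFunc k) (Polynomial.X + 1) := by
      rw [map_add, hmapX, _root_.map_one]
    rw [e]
    exact fun h => h1' (halg (by rw [h, map_zero]))
  have h2 : (RatFunc.X : RatFunc k) - ((a + 3 : ℕ) : RatFunc k) + 3 ≠ 0 := by
    have e : (RatFunc.X : RatFunc k) - ((a + 3 : ℕ) : RatFunc k) + 3
        = algebraMap (Polynomial k) (RatFunc k)
            (Polynomial.X - ((a + 3 : ℕ) : Polynomial k) + 3) := by
      rw [map_add, map_sub, hmapX, map_natCast, map_ofNat]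
    rw [e]
    exact fun h => h2' (halg (by rw [h, map_zero]))
  have key := det_gram a (RatFunc.X : RatFunc k) h1 h2
  have hpoly : (_root_.gram (Polynomial k) (a + 3) Polynomial.X).det
      = (Polynomial.X + 1) ^ ((a + 3) * a / 2)
        * (Polynomial.X - ((a + 3 : ℕ) : Polynomial k) + 3) ^ (a + 2)
        * (Polynomial.X - 2 * ((a + 3 : ℕ) : Polynomial k) + 3) := by
    apply halg
    rw [RingHom.map_det, RingHom.mapMatrix_apply, gram_map, hmapX, key]
    simp only [_root_.map_mul, map_pow, _root_.map_add, map_sub, _root_.map_one, map_natCast, map_ofNat, hmapX]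
  have hk : _root_.gram k (a + 3) m
      = (_root_.gram (Polynomial k) (a + 3) Polynomial.X).map (Polynomial.evalRingHom m) := by
    rw [gram_map, Polynomial.coe_evalRingHom, Polynomial.eval_X]
  rw [hk, ← RingHom.mapMatrix_apply, ← RingHom.map_det, hpoly]
  simp only [_root_.map_mul, map_pow, _root_.map_add, map_sub, Polynomial.coe_evalRingHom,
    Polynomial.eval_X, Polynomial.eval_one, Polynomial.eval_natCast, Polynomial.eval_ofNat,
    Polynomial.eval_mul, Polynomial.eval_add, Polynomial.eval_sub, Polynomial.eval_pow]

lemma gram_isHermitian (m : ℝ) : (_root_.gram ℝ n m).IsHermitian := by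
  rw [Matrix.IsHermitian]
  ext t u
  simp only [Matrix.conjTranspose_apply, _root_.gram, Matrix.of_apply, star_trivial]
  by_cases h : t = u
  · subst h; rfl
  · rw [if_neg h, if_neg (Ne.symm h)]
    by_cases hc : (u : Equiv.Perm (Fin n)) * t = t * u
    · rw [if_pos hc, if_pos hc.symm]
    · rw [if_neg hc, if_neg (fun hh => hc hh.symm)]

lemma mulVec_inc (x : Sw n → ℝ) (i : Fin n) :
    (inc ℝ n *ᵥ x) i
      = ∑ t ∈ univ.filter (fun t : Sw n => (t : Equiv.Perm (Fin n)) i ≠ i), x t := by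
  rw [Finset.sum_filter, Matrix.mulVec, dotProduct]
  refine Finset.sum_congr rfl fun t _ => ?_
  simp only [inc, Matrix.of_apply]
  by_cases h : (t : Equiv.Perm (Fin n)) i = i <;> simp [h]

lemma sum_sq_filter (x : Sw n → ℝ) :
    ∑ i : Fin n, ∑ t ∈ univ.filter (fun t : Sw n => (t : Equiv.Perm (Fin n)) i ≠ i), x t ^ 2
      = 2 * ∑ t : Sw n, x t ^ 2 := by
  have step : ∀ i : Fin n,
      ∑ t ∈ univ.filter (fun t : Sw n => (t : Equiv.Perm (Fin n)) i ≠ i), x t ^ 2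
        = ∑ t : Sw n, if (t : Equiv.Perm (Fin n)) i ≠ i then x t ^ 2 else 0 :=
    fun i => Finset.sum_filter _ _
  rw [Finset.sum_congr rfl fun i _ => step i, Finset.sum_comm]
  rw [Finset.mul_sum]
  refine Finset.sum_congr rfl fun t _ => ?_
  rw [← Finset.sum_filter]
  have : (univ.filter (fun i : Fin n => (t : Equiv.Perm (Fin n)) i ≠ i)).card = 2 :=
    Equiv.Perm.card_support_eq_two.mpr t.2
  rw [Finset.sum_const, this]
  ring

lemma norm_Nx_le (x : Sw n → ℝ) :
    (inc ℝ n *ᵥ x) ⬝ᵥ (inc ℝ n *ᵥ x) ≤ 2 * ((n - 1 : ℕ) : ℝ) * (x ⬝ᵥ x) := by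
  have peri : ∀ i : Fin n, (inc ℝ n *ᵥ x) i * (inc ℝ n *ᵥ x) i
      ≤ ((n - 1 : ℕ) : ℝ) * ∑ t ∈ univ.filter (fun t : Sw n => (t : Equiv.Perm (Fin n)) i ≠ i),
          x t ^ 2 := by
    intro i
    rw [mulVec_inc, ← sq]
    calc (∑ t ∈ univ.filter (fun t : Sw n => (t : Equiv.Perm (Fin n)) i ≠ i), x t) ^ 2
        ≤ (univ.filter (fun t : Sw n => (t : Equiv.Perm (Fin n)) i ≠ i)).card
          * ∑ t ∈ univ.filter (fun t : Sw n => (t : Equiv.Perm (Fin n)) i ≠ i), x t ^ 2 :=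
          sq_sum_le_card_mul_sum_sq
      _ = _ := by rw [card_moving i]
  calc (inc ℝ n *ᵥ x) ⬝ᵥ (inc ℝ n *ᵥ x)
      = ∑ i : Fin n, (inc ℝ n *ᵥ x) i * (inc ℝ n *ᵥ x) i := rfl
    _ ≤ ∑ i : Fin n, ((n - 1 : ℕ) : ℝ)
          * ∑ t ∈ univ.filter (fun t : Sw n => (t : Equiv.Perm (Fin n)) i ≠ i), x t ^ 2 :=
        Finset.sum_le_sum fun i _ => peri i
    _ = ((n - 1 : ℕ) : ℝ) * (2 * ∑ t : Sw n, x t ^ 2) := by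
        rw [← Finset.mul_sum, sum_sq_filter]
    _ = 2 * ((n - 1 : ℕ) : ℝ) * (x ⬝ᵥ x) := by
        rw [dotProduct]
        have : ∑ t : Sw n, x t ^ 2 = ∑ t : Sw n, x t * x t :=
          Finset.sum_congr rfl fun t _ => sq (x t)
        rw [this]
        ring

lemma quad_expand (m : ℝ) (x : Sw n → ℝ) :
    x ⬝ᵥ (_root_.gram ℝ n m *ᵥ x)
      = (m + 1) * (x ⬝ᵥ x) - (inc ℝ n *ᵥ x) ⬝ᵥ (inc ℝ n *ᵥ x) := by
  rw [gram_eq, Matrix.sub_mulVec, dotProduct_sub, Matrix.smul_mulVec,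
    Matrix.one_mulVec, dotProduct_smul, smul_eq_mul,
    ← Matrix.mulVec_mulVec, Matrix.dotProduct_mulVec, Matrix.vecMul_transpose]

lemma gram_posdef_iff (a : ℕ) (m' : ℝ) :
    (_root_.gram ℝ (a + 3) m').PosDef ↔ 2 * ((a + 3 : ℕ) : ℝ) - 3 < m' := by
  have hne : (0 : Fin (a + 3)) ≠ 1 := by simp [Fin.ext_iff]
  have hnonempty : Nonempty (Sw (a + 3)) := ⟨⟨Equiv.swap 0 1, 0, 1, hne, rfl⟩⟩
  have hEpos : 0 < Fintype.card (Sw (a + 3)) := Fintype.card_pos_iff.mpr hnonempty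
  have hEposR : 0 < ((Fintype.card (Sw (a + 3)) : ℝ)) := by exact_mod_cast hEpos
  have hcast : ((a + 3 - 1 : ℕ) : ℝ) = (a : ℝ) + 2 := by
    have : a + 3 - 1 = a + 2 := by omega
    rw [this]; push_cast; ring
  constructor
  · intro h
    have hv : (fun _ : Sw (a + 3) => (1 : ℝ)) ≠ 0 := by
      intro hc
      have := congrFun hc (Classical.choice hnonempty)
      simpa using this
    have quad := h.dotProduct_mulVec_pos hv
    have hstar : star (fun _ : Sw (a + 3) => (1 : ℝ)) = fun _ : Sw (a + 3) => (1 : ℝ) := by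
      funext u; simp
    rw [hstar, quad_expand] at quad
    have h1 : (fun _ : Sw (a + 3) => (1 : ℝ)) ⬝ᵥ (fun _ : Sw (a + 3) => (1 : ℝ))
        = ((Fintype.card (Sw (a + 3)) : ℝ)) := by
      simp [dotProduct]
    have h2 : ∀ i, (inc ℝ (a + 3) *ᵥ (fun _ : Sw (a + 3) => (1 : ℝ))) i = (a : ℝ) + 2 := by
      intro i
      rw [mulVec_inc, Finset.sum_const, card_moving, nsmul_eq_mul, mul_one, hcast]
    have h3 : (inc ℝ (a + 3) *ᵥ (fun _ : Sw (a + 3) => (1 : ℝ)))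
          ⬝ᵥ (inc ℝ (a + 3) *ᵥ (fun _ : Sw (a + 3) => (1 : ℝ)))
        = ((a : ℝ) + 3) * ((a : ℝ) + 2) ^ 2 := by
      rw [dotProduct, Finset.sum_congr rfl fun i _ => by rw [h2 i],
        Finset.sum_const, Finset.card_univ, Fintype.card_fin, nsmul_eq_mul]
      push_cast; ring
    rw [h1, h3] at quad
    have hE : 2 * ((Fintype.card (Sw (a + 3)) : ℝ)) = ((a : ℝ) + 3) * ((a : ℝ) + 2) := by
      have h4 := card_Sw (n := a + 3)
      have h5 : a + 3 - 1 = a + 2 := by omega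
      rw [h5] at h4
      exact_mod_cast h4
    have hE2 : ((a : ℝ) + 3) * ((a : ℝ) + 2) ^ 2
        = 2 * ((Fintype.card (Sw (a + 3)) : ℝ)) * ((a : ℝ) + 2) := by
      linear_combination (-(a : ℝ) - 2) * hE
    have h5eq : ((Fintype.card (Sw (a + 3)) : ℝ)) * (m' - (2 * (a : ℝ) + 3))
        = (m' + 1) * ((Fintype.card (Sw (a + 3)) : ℝ)) - ((a : ℝ) + 3) * ((a : ℝ) + 2) ^ 2 := by
      linear_combination hE2
    have h5 : 0 < ((Fintype.card (Sw (a + 3)) : ℝ)) * (m' - (2 * (a : ℝ) + 3)) := by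
      rw [h5eq]; exact quad
    have h6 : 0 < m' - (2 * (a : ℝ) + 3) := by
      by_contra hc
      push_neg at hc
      nlinarith [hEposR, hc, h5]
    push_cast
    linarith
  · intro hm
    push_cast at hm
    refine Matrix.PosDef.of_dotProduct_mulVec_pos (gram_isHermitian m') fun x hx => ?_
    have hstar : star x = x := by funext u; simp
    rw [hstar, quad_expand]
    obtain ⟨t, ht⟩ := Function.ne_iff.mp hx
    have hxx : 0 < x ⬝ᵥ x := by
      have h1 : x t * x t ≤ ∑ u : Sw (a + 3), x u * x u :=
        Finset.single_le_sum (fun u _ => mul_self_nonneg (x u)) (Finset.mem_univ t)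
      have h2 : 0 < x t * x t := mul_self_pos.mpr ht
      calc (0 : ℝ) < x t * x t := h2
        _ ≤ ∑ u : Sw (a + 3), x u * x u := h1
        _ = x ⬝ᵥ x := rfl
    have hb := norm_Nx_le (n := a + 3) x
    rw [hcast] at hb
    nlinarith [hxx, hb, hm]

end Rest

theorem transposition_gram_det_and_posdef
    (k : Type) [Field k] [CharZero k] (n : ℕ) (hn : 3 ≤ n) (m : k) :
    (transpositionGram k n m).det =
      (m + 1) ^ (n * (n - 3) / 2) * (m - (n : k) + 3) ^ (n - 1) * (m - 2 * (n : k) + 3) ∧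
    (∀ m' : ℝ, (transpositionGram ℝ n m').PosDef ↔ 2 * (n : ℝ) - 3 < m') := by
  obtain ⟨a, rfl⟩ : ∃ a, n = a + 3 := ⟨n - 3, by omega⟩
  constructor
  · have h := det_gram_k k a m
    have e1 : transpositionGram k (a + 3) m = _root_.gram k (a + 3) m := rfl
    rw [e1, show a + 3 - 3 = a from by omega, show a + 3 - 1 = a + 2 from by omega, h]
  · intro m'
    have e2 : transpositionGram ℝ (a + 3) m' = _root_.gram ℝ (a + 3) m' := rfl
    rw [e2]
    exact gram_posdef_iff a m'
end
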